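/- arXiv:1908.10668 — 6 statements merged into one kernel-verified Lean document; each statement's English description precedes it below -/
import Mathlib

section
/- Let G be a connected simple graph on a nonempty finite vertex set V, let T be a spanning tree of G, and let A₁ and A₂ be two gain matrices on G. If for every fundamental cycle w of G with respect to T the gain of w under A₁ equals the gain of w under A₂, then for every cycle w of G the gain of w under A₁ equals the gain of w under A₂. -/
open SimpleGraph

/-- A gain matrix on a simple graph `G`: unimodular entries on edges, zero elsewhere,
and `A j i` is the complex conjugate of `A i j`. -/
def IsGainMatrix {V : Type*} (G : SimpleGraph V) (A : Matrix V V ℂ) : Prop :=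
  (∀ i j, G.Adj i j → ‖A i j‖ = 1) ∧ (∀ i j, ¬ G.Adj i j → A i j = 0) ∧
    (∀ i j, A j i = (starRingEnd ℂ) (A i j))

/-- A gain matrix is Hermitian. -/
theorem IsGainMatrix.isHermitian {V : Type*} {G : SimpleGraph V} {A : Matrix V V ℂ}
    (h : IsGainMatrix G A) : A.IsHermitian := by
  ext i j
  rw [Matrix.conjTranspose_apply, h.2.2 j i]
  rfl

/-- The gain of a walk: the product of the entries of `A` along the darts of the walk. -/
noncomputable def gainOfWalk {V : Type*} {G : SimpleGraph V} (A : Matrix V V ℂ)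
    {u v : V} (w : G.Walk u v) : ℂ :=
  (w.darts.map fun d => A d.fst d.snd).prod

/-- Switching equivalence of two gain matrices. -/
def SwitchingEquiv {V : Type*} (A₁ A₂ : Matrix V V ℂ) : Prop :=
  ∃ ζ : V → ℂ, (∀ v, ‖ζ v‖ = 1) ∧ ∀ i j, A₂ i j = (ζ i)⁻¹ * A₁ i j * ζ j

/-- The largest eigenvalue of a Hermitian matrix. -/
noncomputable def lambdaMax {V : Type*} [Fintype V] [DecidableEq V] {𝕜 : Type*} [RCLike 𝕜]
    (A : Matrix V V 𝕜) (hA : A.IsHermitian) : ℝ :=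
  ⨆ i, hA.eigenvalues i

/-- The spectral radius of a Hermitian matrix: the largest absolute value of an eigenvalue. -/
noncomputable def specRad {V : Type*} [Fintype V] [DecidableEq V] {𝕜 : Type*} [RCLike 𝕜]
    (A : Matrix V V 𝕜) (hA : A.IsHermitian) : ℝ :=
  ⨆ i, |hA.eigenvalues i|

section Aux

open SimpleGraph

variable {V : Type*}

private lemma gain_cons {G : SimpleGraph V} (A : Matrix V V ℂ) {u x v : V}
    (h : G.Adj u x) (p : G.Walk x v) :
    gainOfWalk A (Walk.cons h p) = A u x * gainOfWalk A p := by
  simp [gainOfWalk]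

private lemma gain_nil {G : SimpleGraph V} (A : Matrix V V ℂ) (u : V) :
    gainOfWalk A (Walk.nil : G.Walk u u) = 1 := rfl

private lemma gain_append {G : SimpleGraph V} (A : Matrix V V ℂ) {u x v : V}
    (p : G.Walk u x) (q : G.Walk x v) :
    gainOfWalk A (p.append q) = gainOfWalk A p * gainOfWalk A q := by
  simp [gainOfWalk, SimpleGraph.Walk.darts_append]

private lemma gain_mapLe {G G' : SimpleGraph V} (hle : G ≤ G') (A : Matrix V V ℂ) {u v : V}
    (p : G.Walk u v) : gainOfWalk A (p.mapLe hle) = gainOfWalk A p := by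
  induction p with
  | nil => rfl
  | cons h q ih =>
    show gainOfWalk A (Walk.cons (hle h) _) = _
    rw [gain_cons, gain_cons, ih]

private lemma edges_mapLe {G G' : SimpleGraph V} (hle : G ≤ G') {u v : V}
    (p : G.Walk u v) : (p.mapLe hle).edges = p.edges := by
  induction p with
  | nil => rfl
  | cons h q ih =>
    show (Walk.cons (hle h) _).edges = _
    rw [Walk.edges_cons, Walk.edges_cons, ih]

private lemma gain_norm {G : SimpleGraph V} {A : Matrix V V ℂ}
    (hA : ∀ i j, G.Adj i j → ‖A i j‖ = 1) {u v : V} (p : G.Walk u v) :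
    ‖gainOfWalk A p‖ = 1 := by
  induction p with
  | nil => simp [gainOfWalk]
  | cons h q ih => rw [gain_cons, norm_mul, ih, hA _ _ h, one_mul]

private lemma gain_ne_zero {G : SimpleGraph V} {A : Matrix V V ℂ}
    (hA : ∀ i j, G.Adj i j → ‖A i j‖ = 1) {u v : V} (p : G.Walk u v) :
    gainOfWalk A p ≠ 0 := by
  intro h
  have := gain_norm hA p
  rw [h] at this
  simp at this

/-- Gains of walks in a tree only depend on the endpoints. -/
private lemma gain_tree_walk [DecidableEq V] {T : SimpleGraph V} (hT : T.IsTree) (A : Matrix V V ℂ)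
    (hA : ∀ i j, T.Adj i j → A i j * A j i = 1) {u v : V} (w : T.Walk u v) :
    gainOfWalk A w = gainOfWalk A (hT.existsUnique_path u v).choose := by
  induction w with
  | nil =>
    rw [← (hT.existsUnique_path _ _).choose_spec.2 Walk.nil Walk.IsPath.nil]
  | @cons u x v h p ih =>
    have hPuv := (hT.existsUnique_path u v).choose_spec.1
    by_cases hx : x ∈ ((hT.existsUnique_path u v).choose).support
    · have h1 := (hT.existsUnique_path u x).choose_spec.2 _ (hPuv.takeUntil hx)
      have h2 := (hT.existsUnique_path u x).choose_spec.2 (Walk.cons h Walk.nil)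
        (Walk.IsPath.nil.cons (by simp [h.ne]))
      have htake : ((hT.existsUnique_path u v).choose).takeUntil x hx
          = Walk.cons h Walk.nil := h1.trans h2.symm
      have hdrop : ((hT.existsUnique_path u v).choose).dropUntil x hx
          = (hT.existsUnique_path x v).choose :=
        (hT.existsUnique_path x v).choose_spec.2 _ (hPuv.dropUntil hx)
      conv_rhs => rw [← Walk.take_spec ((hT.existsUnique_path u v).choose) hx]
      rw [gain_append, htake, hdrop, gain_cons A h p, gain_cons A h Walk.nil,
        gain_nil, ih, mul_one]
    · have hcons : Walk.cons h.symm ((hT.existsUnique_path u v).choose)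
          = (hT.existsUnique_path x v).choose :=
        (hT.existsUnique_path x v).choose_spec.2 _ (hPuv.cons hx)
      rw [gain_cons, ih, ← hcons, gain_cons, ← mul_assoc, hA u x h, one_mul]

/-- Telescoping: switching-equivalent matrices have conjugate walk gains. -/
private lemma gain_switch {G : SimpleGraph V} {A₁ A₂ : Matrix V V ℂ} {ζ : V → ℂ}
    (hζ : ∀ v, ζ v ≠ 0)
    (hsw : ∀ i j, G.Adj i j → A₂ i j = (ζ i)⁻¹ * A₁ i j * ζ j)
    {u v : V} (w : G.Walk u v) :
    gainOfWalk A₂ w = (ζ u)⁻¹ * gainOfWalk A₁ w * ζ v := by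
  induction w with
  | nil => rw [gain_nil, gain_nil, mul_one, inv_mul_cancel₀ (hζ _)]
  | @cons u x v h p ih =>
    rw [gain_cons, gain_cons, ih, hsw _ _ h]
    have key : (ζ u)⁻¹ * A₁ u x * ζ x * ((ζ x)⁻¹ * gainOfWalk A₁ p * ζ v)
        = (ζ u)⁻¹ * (A₁ u x * gainOfWalk A₁ p) * ζ v * (ζ x * (ζ x)⁻¹) := by ring
    rw [key, mul_inv_cancel₀ (hζ x), mul_one]

end Aux

/-- If two gain matrices agree on the gains of all fundamental cycles of `G` with respect
to a spanning tree `T`, then they agree on the gains of all cycles of `G`. -/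
theorem stmt_0 {V : Type*} [Fintype V] [Nonempty V] (G : SimpleGraph V) (hG : G.Connected)
    (T : SimpleGraph V) (hTG : T ≤ G) (hT : T.IsTree)
    (A₁ A₂ : Matrix V V ℂ) (h₁ : IsGainMatrix G A₁) (h₂ : IsGainMatrix G A₂)
    (hfund : ∀ (v : V) (w : G.Walk v v), w.IsCycle →
      (∃! e, e ∈ w.edges ∧ e ∉ T.edgeSet) → gainOfWalk A₁ w = gainOfWalk A₂ w) :
    ∀ (v : V) (w : G.Walk v v), w.IsCycle → gainOfWalk A₁ w = gainOfWalk A₂ w := by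
  classical
  obtain ⟨r⟩ := (inferInstance : Nonempty V)
  -- entries of Aₖ on T-edges are unimodular
  have hAT₁ : ∀ i j, T.Adj i j → ‖A₁ i j‖ = 1 := fun i j h => h₁.1 i j (hTG h)
  have hAT₂ : ∀ i j, T.Adj i j → ‖A₂ i j‖ = 1 := fun i j h => h₂.1 i j (hTG h)
  have hmul : ∀ (A : Matrix V V ℂ), IsGainMatrix G A →
      ∀ i j, T.Adj i j → A i j * A j i = 1 := by
    intro A hA i j h
    rw [hA.2.2 i j, Complex.mul_conj, Complex.normSq_eq_norm_sq,
      hA.1 i j (hTG h)]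
    norm_num
  -- canonical tree paths and the switching function
  set P : (u v' : V) → T.Walk u v' := fun u v' => (hT.existsUnique_path u v').choose with hPdef
  set ζ : V → ℂ := fun x => gainOfWalk A₂ (P r x) * (gainOfWalk A₁ (P r x))⁻¹ with hζdef
  have hζ : ∀ x, ζ x ≠ 0 := fun x =>
    mul_ne_zero (gain_ne_zero hAT₂ _) (inv_ne_zero (gain_ne_zero hAT₁ _))
  have hsw : ∀ i j, G.Adj i j → A₂ i j = (ζ i)⁻¹ * A₁ i j * ζ j := by
    intro i j hij
    have ha₁ : gainOfWalk A₁ (P r i) ≠ 0 := gain_ne_zero hAT₁ _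
    have ha₂ : gainOfWalk A₂ (P r i) ≠ 0 := gain_ne_zero hAT₂ _
    have hb₁ : gainOfWalk A₁ (P r j) ≠ 0 := gain_ne_zero hAT₁ _
    have hb₂ : gainOfWalk A₂ (P r j) ≠ 0 := gain_ne_zero hAT₂ _
    have hA1ne : A₁ i j ≠ 0 := by
      intro h0
      have := h₁.1 i j hij
      rw [h0] at this
      simp at this
    simp only [hζdef, hPdef]
    simp only [hPdef] at ha₁ ha₂ hb₁ hb₂
    by_cases hTij : T.Adj i j
    · -- tree edge:  gain (P r j) = gain (P r i) * A i j  for both matrices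
      have key₁ : gainOfWalk A₁ ((P r i).append (Walk.cons hTij Walk.nil))
          = gainOfWalk A₁ (P r j) := gain_tree_walk hT A₁ (hmul A₁ h₁) _
      have key₂ : gainOfWalk A₂ ((P r i).append (Walk.cons hTij Walk.nil))
          = gainOfWalk A₂ (P r j) := gain_tree_walk hT A₂ (hmul A₂ h₂) _
      rw [gain_append, gain_cons, gain_nil, mul_one] at key₁ key₂
      simp only [hPdef] at key₁ key₂
      rw [← key₁, ← key₂]
      field_simp
    · -- non-tree edge: use the fundamental cycle
      have hq : ((P j i).mapLe hTG).IsPath :=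
        ((hT.existsUnique_path j i).choose_spec.1).mapLe hTG
      have hne : s(i, j) ∉ ((P j i).mapLe hTG).edges := by
        intro hmem
        rw [edges_mapLe] at hmem
        exact hTij (T.mem_edgeSet.1 ((P j i).edges_subset_edgeSet hmem))
      have hc : (Walk.cons hij ((P j i).mapLe hTG)).IsCycle :=
        SimpleGraph.Path.cons_isCycle ⟨(P j i).mapLe hTG, hq⟩ hij hne
      have huniq : ∃! e, e ∈ (Walk.cons hij ((P j i).mapLe hTG)).edges ∧ e ∉ T.edgeSet := by
        refine ⟨s(i, j), ⟨by simp, by simpa using hTij⟩, ?_⟩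
        rintro e ⟨he, hnT⟩
        rw [Walk.edges_cons, List.mem_cons] at he
        rcases he with he | he
        · exact he
        · exact absurd ((P j i).edges_subset_edgeSet (by rwa [edges_mapLe] at he)) hnT
      have hgc := hfund i _ hc huniq
      rw [gain_cons, gain_cons, gain_mapLe, gain_mapLe] at hgc
      have hq₁ : gainOfWalk A₁ (P r j) * gainOfWalk A₁ (P j i)
          = gainOfWalk A₁ (P r i) := by
        have := gain_tree_walk hT A₁ (hmul A₁ h₁) ((P r j).append (P j i))
        rw [gain_append] at this
        simpa only [hPdef] using this
      have hq₂ : gainOfWalk A₂ (P r j) * gainOfWalk A₂ (P j i)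
          = gainOfWalk A₂ (P r i) := by
        have := gain_tree_walk hT A₂ (hmul A₂ h₂) ((P r j).append (P j i))
        rw [gain_append] at this
        simpa only [hPdef] using this
      simp only [hPdef] at hq₁ hq₂ hgc ⊢
      field_simp
      linear_combination
        (-(gainOfWalk A₁ ((hT.existsUnique_path r j).choose) *
            gainOfWalk A₂ ((hT.existsUnique_path r j).choose))) * hgc +
        (A₁ i j * gainOfWalk A₂ ((hT.existsUnique_path r j).choose)) * hq₁ -
        (A₂ i j * gainOfWalk A₁ ((hT.existsUnique_path r j).choose)) * hq₂
  intro v w _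
  rw [gain_switch hζ hsw w,
    show (ζ v)⁻¹ * gainOfWalk A₁ w * ζ v
      = gainOfWalk A₁ w * (ζ v * (ζ v)⁻¹) from by ring,
    mul_inv_cancel₀ (hζ v), mul_one]
end

section
/- Let G be a connected simple graph on a nonempty finite vertex set V, let T be a spanning tree of G, and let A₁ and A₂ be two gain matrices on G. Then A₁ and A₂ are switching equivalent if and only if for every fundamental cycle w of G with respect to T the gain of w under A₁ equals the gain of w under A₂. -/
open SimpleGraph

namespace GainAux

variable {V : Type*}

lemma gain_nil {G : SimpleGraph V} (A : Matrix V V ℂ) (u : V) :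
    gainOfWalk A (SimpleGraph.Walk.nil : G.Walk u u) = 1 := rfl

lemma gain_cons {G : SimpleGraph V} (A : Matrix V V ℂ) {u x v : V} (h : G.Adj u x)
    (p : G.Walk x v) :
    gainOfWalk A (SimpleGraph.Walk.cons h p) = A u x * gainOfWalk A p := by
  simp [gainOfWalk]

lemma gain_append {G : SimpleGraph V} (A : Matrix V V ℂ) {u x v : V} (p : G.Walk u x)
    (q : G.Walk x v) : gainOfWalk A (p.append q) = gainOfWalk A p * gainOfWalk A q := by
  simp [gainOfWalk, SimpleGraph.Walk.darts_append]

lemma gain_mapLe {G T : SimpleGraph V} (h : T ≤ G) (A : Matrix V V ℂ) {u v : V}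
    (p : T.Walk u v) : gainOfWalk A (p.mapLe h) = gainOfWalk A p := by
  induction p with
  | nil => rfl
  | @cons a b c h' p ih =>
    have : SimpleGraph.Walk.mapLe h (SimpleGraph.Walk.cons h' p)
        = SimpleGraph.Walk.cons (h h') (SimpleGraph.Walk.mapLe h p) := rfl
    rw [this, gain_cons, gain_cons, ih]

lemma gain_reverse {G : SimpleGraph V} (A : Matrix V V ℂ)
    (hA : ∀ i j, A j i = (starRingEnd ℂ) (A i j)) {u v : V} (w : G.Walk u v) :
    gainOfWalk A w.reverse = (starRingEnd ℂ) (gainOfWalk A w) := by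
  induction w with
  | nil => simp [gain_nil]
  | cons h p ih =>
    rw [SimpleGraph.Walk.reverse_cons, gain_append, gain_cons, ih, gain_cons, gain_nil,
      map_mul, hA]
    ring

lemma norm_gain {G : SimpleGraph V} (A : Matrix V V ℂ) {u v : V} (w : G.Walk u v)
    (h : ∀ d ∈ w.darts, ‖A d.fst d.snd‖ = 1) : ‖gainOfWalk A w‖ = 1 := by
  induction w with
  | nil => simp [gain_nil]
  | @cons a b c h' p ih =>
    have h0 : ‖A a b‖ = 1 := h ⟨(a, b), h'⟩ (by simp)
    rw [gain_cons, norm_mul, ih fun d hd => h d (by simp [hd]), h0, mul_one]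

lemma gain_eq_of_isPath {T : SimpleGraph V} (hT : T.IsTree)
    (A : Matrix V V ℂ) (hA : ∀ i j, T.Adj i j → A i j * A j i = 1) :
    ∀ {u v : V} (w p : T.Walk u v), p.IsPath → gainOfWalk A w = gainOfWalk A p := by
  classical
  have huniq : ∀ {a b : V} (p q : T.Walk a b), p.IsPath → q.IsPath → p = q := by
    intro a b p q hp hq
    exact ((hT.existsUnique_path a b).unique hp hq)
  intro u v w
  induction w with
  | nil =>
    intro p hp
    rw [huniq p .nil hp (SimpleGraph.Walk.IsPath.nil)]
  | @cons u x v h w' ih =>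
    intro p hp
    set q := w'.bypass with hqdef
    have hq : q.IsPath := w'.bypass_isPath
    have hgq : gainOfWalk A w' = gainOfWalk A q := ih q hq
    by_cases hu : u ∈ q.support
    · have hspec := q.take_spec hu
      have hq1 : (q.takeUntil u hu).IsPath := hq.takeUntil hu
      have hq2 : (q.dropUntil u hu).IsPath := hq.dropUntil hu
      have he : q.takeUntil u hu = SimpleGraph.Walk.cons h.symm .nil := by
        apply huniq _ _ hq1
        simp [SimpleGraph.Walk.cons_isPath_iff, h.ne']
      have he2 : q.dropUntil u hu = p := huniq _ _ hq2 hp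
      rw [gain_cons, hgq, ← hspec, gain_append, he, he2, gain_cons, gain_nil, mul_one,
        ← mul_assoc, hA u x h, one_mul]
    · have hcons : (SimpleGraph.Walk.cons h q).IsPath := hq.cons hu
      have := huniq _ _ hcons hp
      rw [gain_cons, hgq, ← this, gain_cons]

lemma edges_mapLe {G T : SimpleGraph V} (h : T ≤ G) {u v : V} (p : T.Walk u v) :
    (p.mapLe h).edges = p.edges := by
  induction p with
  | nil => rfl
  | @cons a b c h' p ih =>
    have : SimpleGraph.Walk.mapLe h (SimpleGraph.Walk.cons h' p)
        = SimpleGraph.Walk.cons (h h') (SimpleGraph.Walk.mapLe h p) := rfl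
    rw [this, SimpleGraph.Walk.edges_cons, SimpleGraph.Walk.edges_cons, ih]

end GainAux

/-- Two gain matrices on `G` are switching equivalent iff they agree on the gains of all
fundamental cycles of `G` with respect to a spanning tree `T`. -/
theorem stmt_1 {V : Type*} [Fintype V] [Nonempty V] (G : SimpleGraph V) (hG : G.Connected)
    (T : SimpleGraph V) (hTG : T ≤ G) (hT : T.IsTree)
    (A₁ A₂ : Matrix V V ℂ) (h₁ : IsGainMatrix G A₁) (h₂ : IsGainMatrix G A₂) :
    SwitchingEquiv A₁ A₂ ↔
      ∀ (v : V) (w : G.Walk v v), w.IsCycle →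
        (∃! e, e ∈ w.edges ∧ e ∉ T.edgeSet) → gainOfWalk A₁ w = gainOfWalk A₂ w := by
  classical
  constructor
  · rintro ⟨ζ, hζ1, hζ2⟩ v w _ _
    have hζ0 : ∀ x, ζ x ≠ 0 := fun x hx => by simpa [hx] using hζ1 x
    have key : ∀ {a b : V} (w : G.Walk a b),
        gainOfWalk A₂ w = (ζ a)⁻¹ * gainOfWalk A₁ w * ζ b := by
      intro a b w
      induction w with
      | nil =>
        rw [GainAux.gain_nil, GainAux.gain_nil, mul_one, inv_mul_cancel₀ (hζ0 _)]
      | @cons a c b h p ih =>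
        rw [GainAux.gain_cons, GainAux.gain_cons, ih, hζ2]
        field_simp [hζ0]
    rw [key w, mul_comm ((ζ v)⁻¹) (gainOfWalk A₁ w), mul_assoc,
      inv_mul_cancel₀ (hζ0 v), mul_one]
  · intro H
    have torsion : ∀ (A : Matrix V V ℂ), IsGainMatrix G A →
        ∀ i j, T.Adj i j → A i j * A j i = 1 := by
      intro A hA i j hij
      rw [hA.2.2 i j, RCLike.mul_conj, hA.1 i j (hTG hij)]
      norm_num
    have hnorm : ∀ (A : Matrix V V ℂ), IsGainMatrix G A →
        ∀ {a b : V} (w : T.Walk a b), ‖gainOfWalk A w‖ = 1 := by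
      intro A hA a b w
      exact GainAux.norm_gain A w fun d _ => hA.1 _ _ (hTG d.adj)
    have htree : ∀ (A : Matrix V V ℂ), IsGainMatrix G A →
        ∀ {a b : V} (w₁ w₂ : T.Walk a b), gainOfWalk A w₁ = gainOfWalk A w₂ := by
      intro A hA a b w₁ w₂
      rw [GainAux.gain_eq_of_isPath hT A (torsion A hA) w₁ w₂.bypass w₂.bypass_isPath,
        GainAux.gain_eq_of_isPath hT A (torsion A hA) w₂ w₂.bypass w₂.bypass_isPath]
    obtain ⟨r⟩ : Nonempty V := inferInstance
    have hP : ∀ v : V, ∃ _p : T.Walk r v, True :=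
      fun v => ⟨(hT.isConnected.preconnected r v).some, trivial⟩
    choose P _ using hP
    have hn₁ : ∀ v, ‖gainOfWalk A₁ (P v)‖ = 1 := fun v => hnorm A₁ h₁ (P v)
    have hn₂ : ∀ v, ‖gainOfWalk A₂ (P v)‖ = 1 := fun v => hnorm A₂ h₂ (P v)
    have h0₁ : ∀ v, gainOfWalk A₁ (P v) ≠ 0 := fun v hv => by simpa [hv] using hn₁ v
    have h0₂ : ∀ v, gainOfWalk A₂ (P v) ≠ 0 := fun v hv => by simpa [hv] using hn₂ v
    have hgain_walk : ∀ (A : Matrix V V ℂ) (hA : IsGainMatrix G A) {a b : V} (q : T.Walk b a),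
        gainOfWalk A q = (gainOfWalk A (P b))⁻¹ * gainOfWalk A (P a) := by
      intro A hA a b q
      rw [htree A hA q ((P b).reverse.append (P a)), GainAux.gain_append,
        GainAux.gain_reverse A hA.2.2, ← RCLike.inv_eq_conj (hnorm A hA (P b))]
    have key : ∀ i j, G.Adj i j → ∃ q : T.Walk j i,
        A₁ i j * gainOfWalk A₁ q = A₂ i j * gainOfWalk A₂ q := by
      intro i j hij
      set q := ((hT.isConnected.preconnected j i).some).bypass with hqdef
      have hqp : q.IsPath := SimpleGraph.Walk.bypass_isPath _
      refine ⟨q, ?_⟩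
      by_cases hTe : s(i, j) ∈ T.edgeSet
      · have hTadj : T.Adj i j := hTe
        have e₁ : gainOfWalk A₁ (SimpleGraph.Walk.cons hTadj q)
            = gainOfWalk A₁ (.nil : T.Walk i i) := htree A₁ h₁ _ _
        have e₂ : gainOfWalk A₂ (SimpleGraph.Walk.cons hTadj q)
            = gainOfWalk A₂ (.nil : T.Walk i i) := htree A₂ h₂ _ _
        rw [GainAux.gain_cons, GainAux.gain_nil] at e₁ e₂
        rw [e₁, e₂]
      · set w : G.Walk i i := SimpleGraph.Walk.cons hij (q.mapLe hTG) with hwdef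
        have hsub : ∀ e ∈ (q.mapLe hTG).edges, e ∈ T.edgeSet := by
          intro e he
          rw [GainAux.edges_mapLe] at he
          exact q.edges_subset_edgeSet he
        have hcyc : w.IsCycle :=
          (SimpleGraph.Walk.cons_isCycle_iff _ hij).mpr
            ⟨hqp.mapLe hTG, fun hmem => hTe (hsub _ hmem)⟩
        have hEU : ∃! e, e ∈ w.edges ∧ e ∉ T.edgeSet := by
          refine ⟨s(i, j), ⟨by rw [hwdef, SimpleGraph.Walk.edges_cons]; exact List.mem_cons_self, hTe⟩, ?_⟩
          rintro e ⟨he, heT⟩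
          rw [hwdef, SimpleGraph.Walk.edges_cons, List.mem_cons] at he
          rcases he with rfl | he
          · rfl
          · exact absurd (hsub e he) heT
        have hw := H i w hcyc hEU
        rw [hwdef, GainAux.gain_cons, GainAux.gain_cons, GainAux.gain_mapLe,
          GainAux.gain_mapLe] at hw
        exact hw
    refine ⟨fun v => (gainOfWalk A₁ (P v))⁻¹ * gainOfWalk A₂ (P v), fun v => by
      rw [norm_mul, norm_inv, hn₁ v, hn₂ v]; norm_num, ?_⟩
    intro i j
    by_cases hij : G.Adj i j
    · obtain ⟨q, hB⟩ := key i j hij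
      rw [hgain_walk A₁ h₁ q, hgain_walk A₂ h₂ q] at hB
      field_simp [h0₁ i, h0₁ j, h0₂ i, h0₂ j] at hB ⊢
      linear_combination -hB
    · rw [h₁.2.1 i j hij, h₂.2.1 i j hij]
      ring
end

section
/- Let G be a connected simple graph on a nonempty finite vertex set V and let A₁ and A₂ be two gain matrices on G. If for every cycle w of G the real part of the gain of w under A₁ equals the real part of the gain of w under A₂, then A₁ and A₂ have the same characteristic polynomial (in particular they are cospectral). -/
open SimpleGraph

section GainAuxSec
namespace GainAux

open Equiv Finset

variable {α : Type*} [Fintype α] [DecidableEq α]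

lemma support_eq_biUnion (σ : Equiv.Perm α) :
    σ.support = σ.cycleFactorsFinset.biUnion Equiv.Perm.support := by
  conv_lhs => rw [← Equiv.Perm.cycleFactorsFinset_noncommProd σ]
  exact Equiv.Perm.support_noncommProd σ.cycleFactorsFinset_pairwise_disjoint

lemma eq_inv_of_mem_of_inv_mem {σ c : Equiv.Perm α} (hc : c ∈ σ.cycleFactorsFinset)
    (hc' : c⁻¹ ∈ σ.cycleFactorsFinset) : c = c⁻¹ := by
  by_contra hne
  have hd := σ.cycleFactorsFinset_pairwise_disjoint hc hc' hne
  have hcyc := (Equiv.Perm.mem_cycleFactorsFinset_iff.mp hc).1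
  have : c = 1 := by
    ext x
    rcases hd x with h | h
    · exact h
    · simpa using (congrArg c h).symm.trans (by simp)
  exact hcyc.ne_one this

lemma inv_not_mem_erase {σ c : Equiv.Perm α} (hc : c ∈ σ.cycleFactorsFinset) :
    c⁻¹ ∉ σ.cycleFactorsFinset.erase c := by
  intro h
  exact (Finset.ne_of_mem_erase h) (eq_inv_of_mem_of_inv_mem hc (Finset.mem_of_mem_erase h)).symm

lemma cycleFactorsFinset_flip {σ c : Equiv.Perm α} (hc : c ∈ σ.cycleFactorsFinset) :
    (c⁻¹ * c⁻¹ * σ).cycleFactorsFinset = insert c⁻¹ (σ.cycleFactorsFinset.erase c) := by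
  have hcyc := (Equiv.Perm.mem_cycleFactorsFinset_iff.mp hc).1
  have hdisj : ((insert c⁻¹ (σ.cycleFactorsFinset.erase c) : Finset (Equiv.Perm α)) :
      Set (Equiv.Perm α)).Pairwise Equiv.Perm.Disjoint := by
    intro x hx y hy hxy
    simp only [coe_insert, Set.mem_insert_iff, mem_coe, Finset.mem_erase] at hx hy
    rcases hx with rfl | hx <;> rcases hy with rfl | hy
    · exact absurd rfl hxy
    · exact (σ.cycleFactorsFinset_pairwise_disjoint hc hy.2 (Ne.symm hy.1)).inv_left
    · exact ((σ.cycleFactorsFinset_pairwise_disjoint hc hx.2 (Ne.symm hx.1)).inv_left).symm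
    · exact σ.cycleFactorsFinset_pairwise_disjoint hx.2 hy.2 hxy
  rw [Equiv.Perm.cycleFactorsFinset_eq_finset]
  refine ⟨?_, hdisj, ?_⟩
  · intro f hf
    rcases Finset.mem_insert.mp hf with rfl | hf
    · exact hcyc.inv
    · exact (Equiv.Perm.mem_cycleFactorsFinset_iff.mp (Finset.mem_of_mem_erase hf)).1
  · rw [Finset.noncommProd_insert_of_notMem _ _ _ _ (inv_not_mem_erase hc)]
    have comm' : ∀ x ∈ σ.cycleFactorsFinset.erase c, ∀ y ∈ σ.cycleFactorsFinset.erase c,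
        x ≠ y → Commute (id x) (id y) := fun x hx y hy hxy =>
      Equiv.Perm.Disjoint.commute (σ.cycleFactorsFinset_pairwise_disjoint
        (Finset.mem_of_mem_erase hx) (Finset.mem_of_mem_erase hy) hxy)
    have h4 := Finset.noncommProd_insert_of_notMem (σ.cycleFactorsFinset.erase c) c id
      (fun x hx y hy hxy => by
        simp only [Finset.coe_insert, Set.mem_insert_iff, Finset.mem_coe] at hx hy
        rcases hx with rfl | hx <;> rcases hy with rfl | hy
        · exact absurd rfl hxy
        · exact Equiv.Perm.Disjoint.commute (σ.cycleFactorsFinset_pairwise_disjoint hc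
            (Finset.mem_of_mem_erase hy) (fun h => (Finset.ne_of_mem_erase hy) h.symm))
        · exact (Equiv.Perm.Disjoint.commute (σ.cycleFactorsFinset_pairwise_disjoint hc
            (Finset.mem_of_mem_erase hx) (fun h => (Finset.ne_of_mem_erase hx) h.symm))).symm
        · exact comm' x hx y hy hxy)
      (Finset.notMem_erase c _)
    have h5 : (insert c (σ.cycleFactorsFinset.erase c)).noncommProd id
        (fun x hx y hy hxy => by
          simp only [Finset.coe_insert, ← Finset.mem_coe] at hx hy
          rw [← Finset.coe_insert, Finset.insert_erase hc] at hx hy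
          exact Equiv.Perm.Disjoint.commute
            (σ.cycleFactorsFinset_pairwise_disjoint hx hy hxy)) = σ := by
      refine (Finset.noncommProd_congr (g := id) (Finset.insert_erase hc) (fun x _ => rfl) _).trans ?_
      exact σ.cycleFactorsFinset_noncommProd
    rw [h4] at h5
    have h6 : ∀ P : Equiv.Perm α, c⁻¹ * c⁻¹ * (id c * P) = id c⁻¹ * P := fun P => by
      simp only [id]; rw [mul_assoc, ← mul_assoc c⁻¹ c P, inv_mul_cancel, one_mul]
    conv_rhs => rw [← h5]
    exact (h6 _).symm

variable {R : Type*} [CommRing R]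

lemma support_flip {σ c : Equiv.Perm α} (hc : c ∈ σ.cycleFactorsFinset) :
    (c⁻¹ * c⁻¹ * σ).support = σ.support := by
  rw [support_eq_biUnion, support_eq_biUnion σ, cycleFactorsFinset_flip hc]
  rw [Finset.biUnion_insert, Equiv.Perm.support_inv]
  conv_rhs => rw [← Finset.insert_erase hc, Finset.biUnion_insert]

lemma flip_step (F : Finset α → R) (w w' : Equiv.Perm α → R) (c : Equiv.Perm α)
    (hne : ∀ d, d ≠ c → d ≠ c⁻¹ → w d = w' d)
    (hsum : w c + w c⁻¹ = w' c + w' c⁻¹)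
    (hself : c = c⁻¹ → w c = w' c) :
    ∑ σ : Equiv.Perm α, F σ.support * ∏ d ∈ σ.cycleFactorsFinset, w d
      = ∑ σ : Equiv.Perm α, F σ.support * ∏ d ∈ σ.cycleFactorsFinset, w' d := by
  by_cases hcc : c = c⁻¹
  · refine Finset.sum_congr rfl fun σ _ => ?_
    congr 1
    refine Finset.prod_congr rfl fun d _ => ?_
    by_cases hdc : d = c
    · exact hdc ▸ hself hcc
    · exact hne d hdc (fun h => hdc (h.trans hcc.symm))
  -- c ≠ c⁻¹
  · have key : ∀ u : Equiv.Perm α → R,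
        ∑ σ : Equiv.Perm α, F σ.support * ∏ d ∈ σ.cycleFactorsFinset, u d
        = (∑ σ ∈ Finset.univ.filter (fun σ : Equiv.Perm α => c ∈ σ.cycleFactorsFinset),
            (F σ.support * (u c * ∏ d ∈ σ.cycleFactorsFinset.erase c, u d)
              + F σ.support * (u c⁻¹ * ∏ d ∈ σ.cycleFactorsFinset.erase c, u d)))
          + ∑ σ ∈ (Finset.univ.filter (fun σ : Equiv.Perm α =>
              c ∉ σ.cycleFactorsFinset ∧ c⁻¹ ∉ σ.cycleFactorsFinset)),
              F σ.support * ∏ d ∈ σ.cycleFactorsFinset, u d := by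
      intro u
      rw [← Finset.sum_filter_add_sum_filter_not Finset.univ
        (fun σ : Equiv.Perm α => c ∈ σ.cycleFactorsFinset ∨ c⁻¹ ∈ σ.cycleFactorsFinset)]
      congr 1
      · -- split the "or" part
        rw [Finset.filter_or, Finset.sum_union (by
          rw [Finset.disjoint_filter]
          intro σ _ h1 h2
          exact hcc (eq_inv_of_mem_of_inv_mem h1 h2))]
        rw [Finset.sum_add_distrib]
        congr 1
        · refine Finset.sum_congr rfl fun σ hσ => ?_
          simp only [Finset.mem_filter] at hσ
          rw [Finset.mul_prod_erase _ _ hσ.2]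
        · refine Finset.sum_nbij' (fun τ => c * c * τ) (fun σ => c⁻¹ * c⁻¹ * σ)
            ?_ ?_ ?_ ?_ ?_
          · intro τ hτ
            simp only [Finset.mem_filter, Finset.mem_univ, true_and] at hτ ⊢
            have := cycleFactorsFinset_flip (σ := τ) (c := c⁻¹) hτ
            rw [inv_inv] at this
            rw [this]
            exact Finset.mem_insert_self _ _
          · intro σ hσ
            simp only [Finset.mem_filter, Finset.mem_univ, true_and] at hσ ⊢
            rw [cycleFactorsFinset_flip hσ]
            exact Finset.mem_insert_self _ _
          · intro τ _
            simp only [← mul_assoc]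
            simp
          · intro σ _
            simp only [← mul_assoc]
            simp
          · intro τ hτ
            simp only [Finset.mem_filter, Finset.mem_univ, true_and] at hτ
            have hflip := cycleFactorsFinset_flip (σ := τ) (c := c⁻¹) hτ
            rw [inv_inv] at hflip
            have hsupp := support_flip (σ := τ) (c := c⁻¹) hτ
            rw [inv_inv] at hsupp
            have hnm : c ∉ τ.cycleFactorsFinset.erase c⁻¹ := by
              have := inv_not_mem_erase (σ := τ) (c := c⁻¹) hτ
              rwa [inv_inv] at this
            have hceq : (c * c * τ).cycleFactorsFinset.erase c
                = τ.cycleFactorsFinset.erase c⁻¹ := by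
              rw [hflip, Finset.erase_insert hnm]
            rw [hsupp, hceq, ← Finset.mul_prod_erase _ _ hτ]
      · apply Finset.sum_congr
        · ext σ; simp only [Finset.mem_filter, Finset.mem_univ, true_and, not_or]
        · intros; rfl
    rw [key w, key w']
    congr 1
    · refine Finset.sum_congr rfl fun σ hσ => ?_
      simp only [Finset.mem_filter] at hσ
      have hc := hσ.2
      have hcinv : c⁻¹ ∉ σ.cycleFactorsFinset := fun h => hcc (eq_inv_of_mem_of_inv_mem hc h)
      have hprod : ∏ d ∈ σ.cycleFactorsFinset.erase c, w d
          = ∏ d ∈ σ.cycleFactorsFinset.erase c, w' d := by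
        refine Finset.prod_congr rfl fun d hd => ?_
        exact hne d (Finset.ne_of_mem_erase hd)
          (fun h => hcinv (h ▸ Finset.mem_of_mem_erase hd))
      rw [← mul_add, ← mul_add, ← add_mul, ← add_mul, hprod, hsum]
    · refine Finset.sum_congr rfl fun σ hσ => ?_
      simp only [Finset.mem_filter, Finset.mem_univ, true_and] at hσ
      congr 1
      refine Finset.prod_congr rfl fun d hd => ?_
      exact hne d (fun h => hσ.1 (h ▸ hd)) (fun h => hσ.2 (h ▸ hd))

open scoped Classical in
lemma flip_sum (F : Finset α → R) (w w' : Equiv.Perm α → R)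
    (hsum : ∀ c : Equiv.Perm α, c.IsCycle → w c + w c⁻¹ = w' c + w' c⁻¹)
    (hself : ∀ c : Equiv.Perm α, c.IsCycle → c = c⁻¹ → w c = w' c) :
    ∑ σ : Equiv.Perm α, F σ.support * ∏ d ∈ σ.cycleFactorsFinset, w d
      = ∑ σ : Equiv.Perm α, F σ.support * ∏ d ∈ σ.cycleFactorsFinset, w' d := by
  suffices H : ∀ (n : ℕ) (w : Equiv.Perm α → R),
      (∀ c : Equiv.Perm α, c.IsCycle → w c + w c⁻¹ = w' c + w' c⁻¹) →
      (∀ c : Equiv.Perm α, c.IsCycle → c = c⁻¹ → w c = w' c) →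
      (Finset.univ.filter fun c : Equiv.Perm α => c.IsCycle ∧ w c ≠ w' c).card ≤ n →
      ∑ σ : Equiv.Perm α, F σ.support * ∏ d ∈ σ.cycleFactorsFinset, w d
        = ∑ σ : Equiv.Perm α, F σ.support * ∏ d ∈ σ.cycleFactorsFinset, w' d by
    exact H _ w hsum hself le_rfl
  intro n
  induction n with
  | zero =>
    intro w hsum0 hself0 hcard
    have hall : ∀ c : Equiv.Perm α, c.IsCycle → w c = w' c := by
      intro c hc
      by_contra hne
      have : c ∈ Finset.univ.filter fun c : Equiv.Perm α => c.IsCycle ∧ w c ≠ w' c := by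
        simp [hc, hne]
      have := Finset.card_pos.mpr ⟨c, this⟩
      omega
    refine Finset.sum_congr rfl fun σ _ => ?_
    congr 1
    exact Finset.prod_congr rfl fun d hd =>
      hall d (Equiv.Perm.mem_cycleFactorsFinset_iff.mp hd).1
  | succ n ih =>
    intro w hsumn hselfn hcard
    by_cases hex : ∃ c : Equiv.Perm α, c.IsCycle ∧ w c ≠ w' c
    · obtain ⟨c, hc, hwc⟩ := hex
      set w'' : Equiv.Perm α → R := fun x => if x = c ∨ x = c⁻¹ then w' x else w x with hw''
      have hw''c : w'' c = w' c := by simp [hw'']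
      have hw''cinv : w'' c⁻¹ = w' c⁻¹ := by simp [hw'']
      have hstep : ∑ σ : Equiv.Perm α, F σ.support * ∏ d ∈ σ.cycleFactorsFinset, w d
          = ∑ σ : Equiv.Perm α, F σ.support * ∏ d ∈ σ.cycleFactorsFinset, w'' d := by
        refine flip_step F w w'' c ?_ ?_ ?_
        · intro d hd1 hd2
          simp [hw'', hd1, hd2]
        · rw [hw''c, hw''cinv]; exact hsumn c hc
        · intro hcc
          rw [hw''c]; exact hselfn c hc hcc
      rw [hstep]
      have hmemne : ∀ d : Equiv.Perm α, ¬ (d = c ∨ d = c⁻¹) → (d⁻¹ = c ∨ d⁻¹ = c⁻¹) → False := by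
        intro d hd hdinv
        rcases hdinv with h | h
        · exact hd (Or.inr (by rw [← h, inv_inv]))
        · exact hd (Or.inl (by rw [← inv_inv d, h, inv_inv]))
      refine ih w'' ?_ ?_ ?_
      · intro d hd
        by_cases hmem : d = c ∨ d = c⁻¹
        · have hinv : d⁻¹ = c ∨ d⁻¹ = c⁻¹ := by
            rcases hmem with rfl | rfl
            · exact Or.inr rfl
            · exact Or.inl (inv_inv c)
          simp only [hw'']
          rw [if_pos hmem, if_pos hinv]
        · have hinv : ¬ (d⁻¹ = c ∨ d⁻¹ = c⁻¹) := fun h => hmemne d hmem h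
          simp only [hw'']
          rw [if_neg hmem, if_neg hinv]
          exact hsumn d hd
      · intro d hd hdd
        by_cases hmem : d = c ∨ d = c⁻¹
        · simp only [hw'']; rw [if_pos hmem]
        · simp only [hw'']; rw [if_neg hmem]; exact hselfn d hd hdd
      · have hsub : (Finset.univ.filter fun d : Equiv.Perm α => d.IsCycle ∧ w'' d ≠ w' d)
            ⊆ (Finset.univ.filter fun d : Equiv.Perm α => d.IsCycle ∧ w d ≠ w' d).erase c := by
          intro d hd
          simp only [Finset.mem_filter, Finset.mem_univ, true_and] at hd
          have hmem : ¬ (d = c ∨ d = c⁻¹) := by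
            intro h
            exact hd.2 (by simp only [hw'']; rw [if_pos h])
          rw [Finset.mem_erase]
          refine ⟨fun h => hmem (Or.inl h), ?_⟩
          simp only [Finset.mem_filter, Finset.mem_univ, true_and]
          refine ⟨hd.1, ?_⟩
          have : w'' d = w d := by simp only [hw'']; rw [if_neg hmem]
          rw [← this]; exact hd.2
        have hcm : c ∈ (Finset.univ.filter fun d : Equiv.Perm α => d.IsCycle ∧ w d ≠ w' d) := by
          simp [hc, hwc]
        have := Finset.card_le_card hsub
        rw [Finset.card_erase_of_mem hcm] at this
        have hpos := Finset.card_pos.mpr ⟨c, hcm⟩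
        omega
    · push_neg at hex
      refine Finset.sum_congr rfl fun σ _ => ?_
      congr 1
      exact Finset.prod_congr rfl fun d hd =>
        hex d (Equiv.Perm.mem_cycleFactorsFinset_iff.mp hd).1

open Polynomial in
lemma charpoly_eq_sum {V : Type*} [Fintype V] [DecidableEq V] (A : Matrix V V ℂ)
    (hdiag : ∀ i, A i i = 0) :
    A.charpoly = ∑ σ : Equiv.Perm V, (∏ i ∈ σ.supportᶜ, (X : ℂ[X])) *
      ∏ c ∈ σ.cycleFactorsFinset,
        (((Equiv.Perm.sign c : ℤ) : ℂ[X]) * ∏ i ∈ c.support, (- C (A (c i) i))) := by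
  rw [Matrix.charpoly, Matrix.det_apply']
  refine Finset.sum_congr rfl fun σ _ => ?_
  have hsign : ((Equiv.Perm.sign σ : ℤ) : ℂ[X])
      = ∏ c ∈ σ.cycleFactorsFinset, ((Equiv.Perm.sign c : ℤ) : ℂ[X]) := by
    have h1 : Equiv.Perm.sign σ = ∏ c ∈ σ.cycleFactorsFinset, Equiv.Perm.sign c := by
      conv_lhs => rw [← σ.cycleFactorsFinset_noncommProd]
      rw [Finset.map_noncommProd]
      exact Finset.noncommProd_eq_prod _ _
    rw [h1]
    push_cast
    rfl
  have hsplit : ∏ i, Matrix.charmatrix A (σ i) i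
      = (∏ i ∈ σ.supportᶜ, (X : ℂ[X])) *
        ∏ c ∈ σ.cycleFactorsFinset, ∏ i ∈ c.support, (- C (A (c i) i)) := by
    rw [← Finset.prod_mul_prod_compl σ.support (fun i => Matrix.charmatrix A (σ i) i)]
    rw [mul_comm]
    congr 1
    · refine Finset.prod_congr rfl fun i hi => ?_
      rw [Finset.mem_compl, Equiv.Perm.notMem_support] at hi
      rw [hi, Matrix.charmatrix_apply_eq, hdiag i, map_zero, sub_zero]
    · conv_lhs => rw [support_eq_biUnion σ]
      rw [Finset.prod_biUnion (fun c hc d hd hcd =>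
        (σ.cycleFactorsFinset_pairwise_disjoint hc hd hcd).disjoint_support)]
      refine Finset.prod_congr rfl fun c hc => Finset.prod_congr rfl fun i hi => ?_
      have hci : c i = σ i := (Equiv.Perm.mem_cycleFactorsFinset_iff.mp hc).2 i hi
      rw [← hci, Matrix.charmatrix_apply_ne _ _ _ (Equiv.Perm.mem_support.mp hi)]
  rw [hsplit, hsign, Finset.prod_mul_distrib]
  ring

section WalkPart

variable {V : Type*} {G : SimpleGraph V}

/-- A walk following the orbit of `a` under a permutation `c`, backwards. -/
def permWalk (G : SimpleGraph V) (c : Equiv.Perm V) (a : V)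
    (h : ∀ m : ℕ, G.Adj ((c ^ (m + 1)) a) ((c ^ m) a)) : (m : ℕ) → G.Walk ((c ^ m) a) a
  | 0 => SimpleGraph.Walk.nil.copy (by simp) rfl
  | (m + 1) => SimpleGraph.Walk.cons (h m) (permWalk G c a h m)

lemma permWalk_support (c : Equiv.Perm V) (a : V)
    (h : ∀ m : ℕ, G.Adj ((c ^ (m + 1)) a) ((c ^ m) a)) :
    ∀ m : ℕ, (permWalk G c a h m).support
      = (List.range (m + 1)).reverse.map fun l => (c ^ l) a
  | 0 => by simp [permWalk, List.range_succ]
  | (m + 1) => by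
    rw [permWalk, SimpleGraph.Walk.support_cons, permWalk_support c a h m]
    simp [List.range_succ]

lemma permWalk_edges (c : Equiv.Perm V) (a : V)
    (h : ∀ m : ℕ, G.Adj ((c ^ (m + 1)) a) ((c ^ m) a)) :
    ∀ m : ℕ, (permWalk G c a h m).edges
      = (List.range m).reverse.map fun l => s((c ^ (l + 1)) a, (c ^ l) a)
  | 0 => by simp [permWalk]
  | (m + 1) => by
    rw [permWalk, SimpleGraph.Walk.edges_cons, permWalk_edges c a h m]
    simp [List.range_succ]

lemma permWalk_gain (A : Matrix V V ℂ) (c : Equiv.Perm V) (a : V)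
    (h : ∀ m : ℕ, G.Adj ((c ^ (m + 1)) a) ((c ^ m) a)) :
    ∀ m : ℕ, gainOfWalk A (permWalk G c a h m)
      = ∏ l ∈ Finset.range m, A ((c ^ (l + 1)) a) ((c ^ l) a)
  | 0 => by simp [permWalk, gainOfWalk]
  | (m + 1) => by
    rw [Finset.prod_range_succ]
    have := permWalk_gain A c a h m
    simp only [permWalk, gainOfWalk, SimpleGraph.Walk.darts_cons, List.map_cons,
      List.prod_cons] at this ⊢
    rw [this]
    ring

end WalkPart

section Main

open scoped Classical

variable {V : Type*} [Fintype V] [DecidableEq V]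

lemma entry_mul_entry (G : SimpleGraph V) (A : Matrix V V ℂ) (hA : IsGainMatrix G A)
    (i j : V) : A j i * A i j = if G.Adj i j then 1 else 0 := by
  classical
  by_cases hadj : G.Adj i j
  · rw [if_pos hadj, hA.2.2 i j, mul_comm, Complex.mul_conj]
    have hn := hA.1 i j hadj
    norm_cast
    rw [Complex.normSq_eq_norm_sq, hn, one_pow]
  · rw [hA.2.1 i j hadj, mul_zero, if_neg hadj]

lemma prod_support_card_two (G : SimpleGraph V) (A : Matrix V V ℂ) (hA : IsGainMatrix G A)
    (c : Equiv.Perm V) (hcard : c.support.card = 2) :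
    ∃ i j : V, i ≠ j ∧ c.support = {i, j} ∧
      ∏ k ∈ c.support, A (c k) k = if G.Adj i j then 1 else 0 := by
  classical
  obtain ⟨i, j, hij, hsupp⟩ := Finset.card_eq_two.mp hcard
  have hi : i ∈ c.support := by rw [hsupp]; simp
  have hj : j ∈ c.support := by rw [hsupp]; simp
  have hci : c i = j := by
    have h2 := Equiv.Perm.apply_mem_support.mpr hi
    rw [hsupp] at h2
    simp only [Finset.mem_insert, Finset.mem_singleton] at h2
    rcases h2 with h2 | h2
    · exact absurd h2 (Equiv.Perm.mem_support.mp hi)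
    · exact h2
  have hcj : c j = i := by
    have h2 := Equiv.Perm.apply_mem_support.mpr hj
    rw [hsupp] at h2
    simp only [Finset.mem_insert, Finset.mem_singleton] at h2
    rcases h2 with h2 | h2
    · exact h2
    · exact absurd h2 (Equiv.Perm.mem_support.mp hj)
  refine ⟨i, j, hij, hsupp, ?_⟩
  rw [hsupp, Finset.prod_insert (by simp [hij]), Finset.prod_singleton, hci, hcj]
  exact entry_mul_entry G A hA i j

lemma prod_two_eq (G : SimpleGraph V)
    (A₁ A₂ : Matrix V V ℂ) (h₁ : IsGainMatrix G A₁) (h₂ : IsGainMatrix G A₂)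
    (c : Equiv.Perm V) (hcard : c.support.card = 2) :
    ∏ i ∈ c.support, A₁ (c i) i = ∏ i ∈ c.support, A₂ (c i) i := by
  obtain ⟨i, j, hij, hsupp, hp1⟩ := prod_support_card_two G A₁ h₁ c hcard
  obtain ⟨i', j', hij', hsupp', hp2⟩ := prod_support_card_two G A₂ h₂ c hcard
  rw [hp1, hp2]
  have hii : ({i, j} : Finset V) = {i', j'} := by rw [← hsupp, ← hsupp']
  have hmem : i' ∈ ({i, j} : Finset V) := by rw [hii]; simp
  have hmem' : j' ∈ ({i, j} : Finset V) := by rw [hii]; simp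
  simp only [Finset.mem_insert, Finset.mem_singleton] at hmem hmem'
  have : G.Adj i j ↔ G.Adj i' j' := by
    rcases hmem with rfl | rfl <;> rcases hmem' with rfl | rfl
    · exact absurd rfl hij'
    · rfl
    · exact ⟨fun h => h.symm, fun h => h.symm⟩
    · exact absurd rfl hij'.symm
  rw [if_congr this rfl rfl]

lemma re_prod_eq (G : SimpleGraph V)
    (A₁ A₂ : Matrix V V ℂ) (h₁ : IsGainMatrix G A₁) (h₂ : IsGainMatrix G A₂)
    (hre : ∀ (v : V) (w : G.Walk v v), w.IsCycle →
      (gainOfWalk A₁ w).re = (gainOfWalk A₂ w).re)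
    (c : Equiv.Perm V) (hc : c.IsCycle) :
    (∏ i ∈ c.support, A₁ (c i) i).re = (∏ i ∈ c.support, A₂ (c i) i).re := by
  classical
  by_cases hadj : ∀ i ∈ c.support, G.Adj (c i) i
  · by_cases hc2 : c.support.card = 2
    · exact congrArg Complex.re (prod_two_eq G A₁ A₂ h₁ h₂ c hc2)
    · -- cycle of length at least 3
      have h2le := hc.two_le_card_support
      set n := c.support.card with hn
      have hn3 : 3 ≤ n := by omega
      obtain ⟨a, ha⟩ := Finset.card_pos.mp (show 0 < c.support.card by omega)
      have horder : orderOf c = n := hc.orderOf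
      have hpow : ∀ m : ℕ, ((c ^ m) a) ∈ c.support :=
        fun m => Equiv.Perm.pow_apply_mem_support.mpr ha
      have hadj' : ∀ m : ℕ, G.Adj ((c ^ (m + 1)) a) ((c ^ m) a) := by
        intro m
        have := hadj _ (hpow m)
        rwa [← Equiv.Perm.mul_apply, ← pow_succ'] at this
      have hcn : (c ^ n) a = a := by
        rw [← horder, pow_orderOf_eq_one]; rfl
      have hmod : ∀ m : ℕ, (c ^ m) a = (c ^ (m % n)) a := by
        intro m
        have := pow_mod_orderOf c m
        rw [horder] at this
        rw [this]
      have hinj : ∀ i < n, ∀ j < n, (c ^ i) a = (c ^ j) a → i = j := by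
        have haux : ∀ i j : ℕ, i ≤ j → j < n → (c ^ i) a = (c ^ j) a → i = j := by
          intro i j hij hjn heq
          have hsplit : c ^ j = c ^ (j - i) * c ^ i := by
            rw [← pow_add]; congr 1; omega
          have hb : (c ^ (j - i)) ((c ^ i) a) = (c ^ i) a := by
            conv_lhs => rw [← Equiv.Perm.mul_apply, ← hsplit]
            exact heq.symm
          have hone : c ^ (j - i) = 1 :=
            (hc.pow_eq_one_iff' (Equiv.Perm.mem_support.mp (hpow i))).mpr hb
          have hdvd := orderOf_dvd_of_pow_eq_one hone
          rw [horder] at hdvd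
          rcases Nat.eq_zero_or_pos (j - i) with h0 | hposji
          · omega
          · have := Nat.le_of_dvd hposji hdvd
            omega
        intro i hi j hj heq
        rcases le_total i j with h | h
        · exact haux i j h hj heq
        · exact (haux j i h hi heq.symm).symm
      set p := permWalk G c a hadj' n with hp
      set w : G.Walk a a := p.copy hcn rfl with hw
      have hsupport : w.support = (List.range (n + 1)).reverse.map fun l => (c ^ l) a := by
        rw [hw, SimpleGraph.Walk.support_copy, hp, permWalk_support]
      have hedges : w.edges
          = (List.range n).reverse.map fun l => s((c ^ (l + 1)) a, (c ^ l) a) := by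
        rw [hw, SimpleGraph.Walk.edges_copy, hp, permWalk_edges]
      have hwcyc : w.IsCycle := by
        rw [SimpleGraph.Walk.isCycle_def]
        refine ⟨⟨?_⟩, ?_, ?_⟩
        · rw [hedges]
          refine List.Nodup.map_on ?_ (List.nodup_reverse.mpr List.nodup_range)
          intro x hx y hy hxy
          rw [List.mem_reverse, List.mem_range] at hx hy
          rw [Sym2.eq_iff] at hxy
          rcases hxy with ⟨h1, h2⟩ | ⟨h1, h2⟩
          · exact hinj x hx y hy h2
          · exfalso
            have e1 : (x + 1) % n = y := by
              refine hinj ((x + 1) % n) (Nat.mod_lt _ (by omega)) y hy ?_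
              rw [← hmod (x + 1)]; exact h1
            have e2 : x = (y + 1) % n := by
              refine hinj x hx ((y + 1) % n) (Nat.mod_lt _ (by omega)) ?_
              rw [← hmod (y + 1)]; exact h2
            rcases Nat.lt_or_ge (x + 1) n with hlt | hge
            · rw [Nat.mod_eq_of_lt hlt] at e1
              rcases Nat.lt_or_ge (y + 1) n with hlt2 | hge2
              · rw [Nat.mod_eq_of_lt hlt2] at e2
                omega
              · have : y + 1 = n := by omega
                rw [this, Nat.mod_self] at e2
                omega
            · have hxe : x + 1 = n := by omega
              rw [hxe, Nat.mod_self] at e1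
              rcases Nat.lt_or_ge (y + 1) n with hlt2 | hge2
              · rw [Nat.mod_eq_of_lt hlt2] at e2
                omega
              · have : y + 1 = n := by omega
                rw [this, Nat.mod_self] at e2
                omega
        · intro hnil
          have := congrArg (fun q => q.edges.length) hnil
          simp only [SimpleGraph.Walk.edges_nil, List.length_nil, hedges,
            List.length_map, List.length_reverse, List.length_range] at this
          omega
        · have htail : w.support.tail = (List.range n).reverse.map fun l => (c ^ l) a := by
            rw [hsupport, List.range_succ, List.reverse_append]
            simp
          rw [htail]
          refine List.Nodup.map_on ?_ (List.nodup_reverse.mpr List.nodup_range)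
          intro x hx y hy hxy
          rw [List.mem_reverse, List.mem_range] at hx hy
          exact hinj x hx y hy hxy
      have hgainA : ∀ A : Matrix V V ℂ, gainOfWalk A w = ∏ i ∈ c.support, A (c i) i := by
        intro A
        have h0 : gainOfWalk A w = gainOfWalk A p := by
          rw [hw]; unfold gainOfWalk; rw [SimpleGraph.Walk.darts_copy]
        rw [h0, hp, permWalk_gain]
        refine Finset.prod_bij (fun l _ => (c ^ l) a) ?_ ?_ ?_ ?_
        · intro l _; exact hpow l
        · intro x hx y hy h
          exact hinj x (Finset.mem_range.mp hx) y (Finset.mem_range.mp hy) h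
        · intro b hb
          obtain ⟨m, hm⟩ := hc.exists_pow_eq (Equiv.Perm.mem_support.mp ha)
            (Equiv.Perm.mem_support.mp hb)
          exact ⟨m % n, Finset.mem_range.mpr (Nat.mod_lt _ (by omega)),
            by show (c ^ (m % n)) a = b; rw [← hmod]; exact hm⟩
        · intro l _
          rw [pow_succ']
          rfl
      have hgain := hre a w hwcyc
      rw [hgainA A₁, hgainA A₂] at hgain
      exact hgain
  · push_neg at hadj
    obtain ⟨i, hi, hna⟩ := hadj
    rw [Finset.prod_eq_zero (f := fun k => A₁ (c k) k) hi (h₁.2.1 _ _ hna),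
      Finset.prod_eq_zero (f := fun k => A₂ (c k) k) hi (h₂.2.1 _ _ hna)]

end Main

end GainAux
end GainAuxSec

/-- If two gain matrices have cycle gains with equal real parts on every cycle of `G`,
then they have the same characteristic polynomial. -/
theorem stmt_3 {V : Type*} [Fintype V] [Nonempty V] [DecidableEq V]
    (G : SimpleGraph V) (hG : G.Connected)
    (A₁ A₂ : Matrix V V ℂ) (h₁ : IsGainMatrix G A₁) (h₂ : IsGainMatrix G A₂)
    (hre : ∀ (v : V) (w : G.Walk v v), w.IsCycle →
      (gainOfWalk A₁ w).re = (gainOfWalk A₂ w).re) :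
    A₁.charpoly = A₂.charpoly := by
  classical
  have hdiag₁ : ∀ i, A₁ i i = 0 := fun i => h₁.2.1 i i (G.irrefl)
  have hdiag₂ : ∀ i, A₂ i i = 0 := fun i => h₂.2.1 i i (G.irrefl)
  rw [GainAux.charpoly_eq_sum A₁ hdiag₁, GainAux.charpoly_eq_sum A₂ hdiag₂]
  have hprodC : ∀ (A : Matrix V V ℂ) (d : Equiv.Perm V),
      ∏ i ∈ d.support, (- Polynomial.C (A (d i) i))
        = (-1) ^ d.support.card * Polynomial.C (∏ i ∈ d.support, A (d i) i) := by
    intro A d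
    rw [Finset.prod_congr rfl (fun i _ => (neg_one_mul (Polynomial.C (A (d i) i))).symm),
      Finset.prod_mul_distrib, Finset.prod_const, map_prod]
  have hconj : ∀ (A : Matrix V V ℂ), IsGainMatrix G A → ∀ c : Equiv.Perm V,
      ∏ i ∈ c⁻¹.support, A (c⁻¹ i) i
        = (starRingEnd ℂ) (∏ i ∈ c.support, A (c i) i) := by
    intro A hA c
    rw [Equiv.Perm.support_inv, map_prod]
    refine Finset.prod_bij (fun i _ => c⁻¹ i) ?_ ?_ ?_ ?_
    · intro i hi
      have h0 : i ∈ c⁻¹.support := by rwa [Equiv.Perm.support_inv]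
      have h1 := Equiv.Perm.apply_mem_support.mpr h0
      rwa [Equiv.Perm.support_inv] at h1
    · intro x _ y _ h
      exact (c⁻¹).injective h
    · intro j hj
      refine ⟨c j, Equiv.Perm.apply_mem_support.mpr hj, ?_⟩
      simp
    · intro i _
      rw [show c (c⁻¹ i) = i from c.apply_symm_apply i]
      exact hA.2.2 i (c⁻¹ i)
  refine GainAux.flip_sum (fun s => ∏ _i ∈ sᶜ, (Polynomial.X : Polynomial ℂ))
    (fun c => ((Equiv.Perm.sign c : ℤ) : Polynomial ℂ)
      * ∏ i ∈ c.support, (- Polynomial.C (A₁ (c i) i)))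
    (fun c => ((Equiv.Perm.sign c : ℤ) : Polynomial ℂ)
      * ∏ i ∈ c.support, (- Polynomial.C (A₂ (c i) i))) ?_ ?_
  · intro c hc
    beta_reduce
    rw [hprodC A₁ c, hprodC A₁ c⁻¹, hprodC A₂ c, hprodC A₂ c⁻¹,
      hconj A₁ h₁ c, hconj A₂ h₂ c, Equiv.Perm.support_inv, Equiv.Perm.sign_inv]
    have haux : ∀ z : ℂ,
        ((Equiv.Perm.sign c : ℤ) : Polynomial ℂ)
            * ((-1) ^ c.support.card * Polynomial.C z)
          + ((Equiv.Perm.sign c : ℤ) : Polynomial ℂ)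
            * ((-1) ^ c.support.card * Polynomial.C ((starRingEnd ℂ) z))
        = ((Equiv.Perm.sign c : ℤ) : Polynomial ℂ)
            * ((-1) ^ c.support.card * Polynomial.C ((2 * z.re : ℝ) : ℂ)) := by
      intro z
      rw [← mul_add, ← mul_add, ← map_add, Complex.add_conj]
    rw [haux, haux, GainAux.re_prod_eq G A₁ A₂ h₁ h₂ hre c hc]
  · intro c hc hcc
    beta_reduce
    have hsq : c ^ 2 = 1 := by
      rw [pow_two, mul_eq_one_iff_eq_inv]
      exact hcc
    have hdvd := orderOf_dvd_of_pow_eq_one hsq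
    have h2 := hc.two_le_card_support
    have horder := hc.orderOf
    have hcard : c.support.card = 2 := by
      have := Nat.le_of_dvd (by norm_num) hdvd
      omega
    rw [hprodC A₁ c, hprodC A₂ c, GainAux.prod_two_eq G A₁ A₂ h₁ h₂ c hcard]
end

section
/- Let G be a connected simple graph on a nonempty finite vertex set V. The following are equivalent: (1) G is a tree; (2) any two gain matrices on G have the same characteristic polynomial; (3) any two gain matrices on G have the same spectral radius. -/
open SimpleGraph

open Polynomial Matrix

section Aux
set_option linter.unusedSectionVars false

variable {V : Type*} [Fintype V] [DecidableEq V]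

theorem charpoly_conj_eq (P Q A : Matrix V V ℂ) (h : P * Q = 1) :
    (P * A * Q).charpoly = A.charpoly := by
  have hmap : ∀ (M N : Matrix V V ℂ), (M * N).map (Polynomial.C : ℂ →+* ℂ[X])
      = M.map Polynomial.C * N.map Polynomial.C := fun M N => Matrix.map_mul
  have key : charmatrix (P * A * Q) =
      P.map Polynomial.C * charmatrix A * Q.map Polynomial.C := by
    unfold charmatrix
    rw [mul_sub, sub_mul]
    congr 1
    · rw [← (Matrix.scalar_commute (X : ℂ[X]) (fun r => Commute.all _ r) (P.map Polynomial.C)).eq,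
        mul_assoc, ← hmap, h, Matrix.map_one _ (map_zero _) (map_one _), mul_one]
    · show (C.mapMatrix (P * A * Q) : Matrix V V ℂ[X]) = _
      rw [RingHom.mapMatrix_apply, hmap, hmap]
      rfl
  have h2 : (P * A * Q).charpoly = (P.map Polynomial.C).det * A.charpoly * (Q.map Polynomial.C).det := by
    rw [Matrix.charpoly, key, det_mul, det_mul]; rfl
  have h3 : (P.map (Polynomial.C : ℂ →+* ℂ[X])).det * (Q.map Polynomial.C).det = 1 := by
    rw [← det_mul, ← hmap, h, Matrix.map_one _ (map_zero _) (map_one _), det_one]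
  calc (P * A * Q).charpoly
      = ((P.map (Polynomial.C : ℂ →+* ℂ[X])).det * (Q.map Polynomial.C).det) * A.charpoly := by
        rw [h2]; ring
    _ = A.charpoly := by rw [h3, one_mul]

theorem charpoly_diag (d : V → ℂ) :
    (diagonal d).charpoly = ∏ i, (X - C (d i)) := by
  rw [Matrix.charpoly]
  have : charmatrix (diagonal d) = diagonal (fun i => (X : ℂ[X]) - C (d i)) := by
    unfold charmatrix
    ext i j
    by_cases hij : i = j <;>
      simp [hij, Matrix.scalar, diagonal, Matrix.sub_apply, Matrix.smul_apply, Matrix.one_apply]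
  rw [this, det_diagonal]

theorem hermitian_charpoly_eq_prod (A : Matrix V V ℂ) (hA : A.IsHermitian) :
    A.charpoly = ∏ i, (X - C (hA.eigenvalues i : ℂ)) := by
  have hU := Matrix.mem_unitaryGroup_iff.mp (Matrix.IsHermitian.eigenvectorUnitary hA).2
  calc A.charpoly
      = ((Matrix.IsHermitian.eigenvectorUnitary hA : Matrix V V ℂ)
          * diagonal (RCLike.ofReal ∘ hA.eigenvalues)
          * (star (Matrix.IsHermitian.eigenvectorUnitary hA : Matrix V V ℂ))).charpoly := by
        conv_lhs => rw [Matrix.IsHermitian.spectral_theorem hA, Unitary.conjStarAlgAut_apply]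
    _ = (diagonal (RCLike.ofReal ∘ hA.eigenvalues)).charpoly := charpoly_conj_eq _ _ _ hU
    _ = ∏ i, (X - C (hA.eigenvalues i : ℂ)) := charpoly_diag _

theorem range_eigen_eq_of_charpoly_eq (A₁ A₂ : Matrix V V ℂ) (h₁ : A₁.IsHermitian)
    (h₂ : A₂.IsHermitian) (h : A₁.charpoly = A₂.charpoly) :
    (Finset.univ.val.map fun i => ((h₁.eigenvalues i : ℂ)))
      = (Finset.univ.val.map fun i => ((h₂.eigenvalues i : ℂ))) := by
  have e1 := hermitian_charpoly_eq_prod A₁ h₁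
  have e2 := hermitian_charpoly_eq_prod A₂ h₂
  have key : ∀ (c : V → ℂ), (∏ i, (X - C (c i))).roots = Finset.univ.val.map c := by
    intro c
    have : (∏ i, (X - C (c i))) = ((Finset.univ.val.map c).map fun a => X - C a).prod := by
      rw [Multiset.map_map]; rfl
    rw [this, Polynomial.roots_multiset_prod_X_sub_C]
  have := congrArg Polynomial.roots (e1.symm.trans (h.trans e2))
  rwa [key, key] at this

theorem specRad_eq_of_charpoly_eq [Nonempty V] (A₁ A₂ : Matrix V V ℂ) (h₁ : A₁.IsHermitian)
    (h₂ : A₂.IsHermitian) (h : A₁.charpoly = A₂.charpoly) :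
    specRad A₁ h₁ = specRad A₂ h₂ := by
  have hm := range_eigen_eq_of_charpoly_eq A₁ A₂ h₁ h₂ h
  have key : ∀ (f g : V → ℝ), ((Finset.univ.val.map fun i => ((f i : ℂ)))
      = (Finset.univ.val.map fun i => ((g i : ℂ)))) → ∀ i, ∃ j, g j = f i := by
    intro f g hfg i
    have : ((f i : ℂ)) ∈ Finset.univ.val.map (fun i => ((g i : ℂ))) := by
      rw [← hfg]
      exact Multiset.mem_map.mpr ⟨i, Finset.mem_val.mpr (Finset.mem_univ i), rfl⟩
    obtain ⟨j, _, hj⟩ := Multiset.mem_map.mp this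
    exact ⟨j, Complex.ofReal_inj.mp hj⟩
  have k1 := key _ _ hm
  have k2 := key _ _ hm.symm
  unfold specRad
  apply le_antisymm
  · refine ciSup_le fun i => ?_
    obtain ⟨j, hj⟩ := k1 i
    rw [← hj]
    exact le_ciSup (f := fun i => |h₂.eigenvalues i|)
      (Set.Finite.bddAbove (Set.finite_range _)) j
  · refine ciSup_le fun i => ?_
    obtain ⟨j, hj⟩ := k2 i
    rw [← hj]
    exact le_ciSup (f := fun i => |h₁.eigenvalues i|)
      (Set.Finite.bddAbove (Set.finite_range _)) j

lemma unitary_dot (U : Matrix V V ℂ) (h : star U * U = 1) (y z : V → ℂ) :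
    star (U *ᵥ y) ⬝ᵥ (U *ᵥ z) = star y ⬝ᵥ z := by
  rw [Matrix.star_mulVec, Matrix.dotProduct_mulVec, Matrix.vecMul_vecMul,
    ← Matrix.star_eq_conjTranspose, h, Matrix.vecMul_one]

lemma herm_quad (M : Matrix V V ℂ) (hM : M.IsHermitian) (y : V → ℂ) :
    star ((hM.eigenvectorUnitary : Matrix V V ℂ) *ᵥ y) ⬝ᵥ
      (M *ᵥ ((hM.eigenvectorUnitary : Matrix V V ℂ) *ᵥ y))
    = ∑ i, (RCLike.ofReal (hM.eigenvalues i) : ℂ) * (Complex.normSq (y i) : ℂ) := by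
  set U : Matrix V V ℂ := (hM.eigenvectorUnitary : Matrix V V ℂ) with hUdef
  have hsU : star U * U = 1 := Matrix.mem_unitaryGroup_iff'.mp hM.eigenvectorUnitary.2
  have key : M *ᵥ (U *ᵥ y) = U *ᵥ ((diagonal (RCLike.ofReal ∘ hM.eigenvalues)) *ᵥ y) := by
    conv_lhs => rw [hM.spectral_theorem, Unitary.conjStarAlgAut_apply]
    rw [Matrix.mulVec_mulVec, Matrix.mulVec_mulVec, mul_assoc, mul_assoc, hsU, mul_one]
  rw [key, unitary_dot U hsU]
  simp only [dotProduct, Matrix.mulVec_diagonal, Pi.star_apply, RCLike.star_def,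
    Function.comp_apply]
  refine Finset.sum_congr rfl fun i _ => ?_
  have : (starRingEnd ℂ) (y i) * y i = (Complex.normSq (y i) : ℂ) := by
    rw [Complex.normSq_eq_conj_mul_self]
  rw [← this]
  ring

lemma herm_norm_quad (U : Matrix V V ℂ) (h : star U * U = 1) (y : V → ℂ) :
    ∑ i, Complex.normSq ((U *ᵥ y) i) = ∑ i, Complex.normSq (y i) := by
  have := unitary_dot U h y y
  have e : ∀ z : V → ℂ, star z ⬝ᵥ z = ((∑ i, Complex.normSq (z i) : ℝ) : ℂ) := by
    intro z
    simp only [dotProduct, Pi.star_apply, RCLike.star_def]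
    push_cast
    refine Finset.sum_congr rfl fun i _ => ?_
    rw [Complex.normSq_eq_conj_mul_self]
  rw [e, e] at this
  exact_mod_cast this

lemma herm_mulVec (M : Matrix V V ℂ) (hM : M.IsHermitian) (y : V → ℂ) :
    M *ᵥ ((hM.eigenvectorUnitary : Matrix V V ℂ) *ᵥ y)
      = (hM.eigenvectorUnitary : Matrix V V ℂ) *ᵥ
        ((diagonal (RCLike.ofReal ∘ hM.eigenvalues)) *ᵥ y) := by
  have hsU : star (hM.eigenvectorUnitary : Matrix V V ℂ) * (hM.eigenvectorUnitary : Matrix V V ℂ)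
      = 1 := Matrix.mem_unitaryGroup_iff'.mp hM.eigenvectorUnitary.2
  calc M *ᵥ ((hM.eigenvectorUnitary : Matrix V V ℂ) *ᵥ y)
      = ((hM.eigenvectorUnitary : Matrix V V ℂ) * diagonal (RCLike.ofReal ∘ hM.eigenvalues)
          * star (hM.eigenvectorUnitary : Matrix V V ℂ)) *ᵥ
          ((hM.eigenvectorUnitary : Matrix V V ℂ) *ᵥ y) :=
        congrArg (fun N => N *ᵥ ((hM.eigenvectorUnitary : Matrix V V ℂ) *ᵥ y))
          hM.spectral_theorem
    _ = _ := by
        rw [Matrix.mulVec_mulVec, Matrix.mulVec_mulVec, mul_assoc, mul_assoc, hsU, mul_one]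

lemma herm_quad_re (M : Matrix V V ℂ) (hM : M.IsHermitian) (y : V → ℂ) :
    (star ((hM.eigenvectorUnitary : Matrix V V ℂ) *ᵥ y) ⬝ᵥ
      (M *ᵥ ((hM.eigenvectorUnitary : Matrix V V ℂ) *ᵥ y))).re
    = ∑ i, hM.eigenvalues i * Complex.normSq (y i) := by
  rw [herm_quad M hM y, Complex.re_sum]
  refine Finset.sum_congr rfl fun i _ => ?_
  have : (RCLike.ofReal (hM.eigenvalues i) : ℂ) = ((hM.eigenvalues i : ℝ) : ℂ) := rfl
  rw [this, ← Complex.ofReal_mul, Complex.ofReal_re]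

lemma exists_preim (M : Matrix V V ℂ) (hM : M.IsHermitian) (x : V → ℂ) :
    ∃ y : V → ℂ, x = (hM.eigenvectorUnitary : Matrix V V ℂ) *ᵥ y
      ∧ ∑ i, Complex.normSq (y i) = ∑ i, Complex.normSq (x i) := by
  set U : Matrix V V ℂ := (hM.eigenvectorUnitary : Matrix V V ℂ)
  have hsU : star U * U = 1 := Matrix.mem_unitaryGroup_iff'.mp hM.eigenvectorUnitary.2
  have hUs : U * star U = 1 := Matrix.mem_unitaryGroup_iff.mp hM.eigenvectorUnitary.2
  refine ⟨star U *ᵥ x, ?_, ?_⟩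
  · rw [Matrix.mulVec_mulVec, hUs, Matrix.one_mulVec]
  · have hx : U *ᵥ (star U *ᵥ x) = x := by
      rw [Matrix.mulVec_mulVec, hUs, Matrix.one_mulVec]
    conv_rhs => rw [← hx]
    rw [herm_norm_quad U hsU]

lemma eigen_le_lambdaMax (M : Matrix V V ℂ) (hM : M.IsHermitian) [Nonempty V] (i : V) :
    hM.eigenvalues i ≤ lambdaMax M hM :=
  le_ciSup (f := hM.eigenvalues) (Set.Finite.bddAbove (Set.finite_range _)) i

lemma rayleigh_le [Nonempty V] (M : Matrix V V ℂ) (hM : M.IsHermitian) (x : V → ℂ) :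
    (star x ⬝ᵥ (M *ᵥ x)).re ≤ lambdaMax M hM * ∑ i, Complex.normSq (x i) := by
  obtain ⟨y, rfl, hn⟩ := exists_preim M hM x
  rw [herm_quad_re, ← hn, Finset.mul_sum]
  refine Finset.sum_le_sum fun i _ => ?_
  exact mul_le_mul_of_nonneg_right (eigen_le_lambdaMax M hM i) (Complex.normSq_nonneg _)

lemma rayleigh_eq_case [Nonempty V] (M : Matrix V V ℂ) (hM : M.IsHermitian) (x : V → ℂ)
    (h : (star x ⬝ᵥ (M *ᵥ x)).re = lambdaMax M hM * ∑ i, Complex.normSq (x i)) :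
    M *ᵥ x = (lambdaMax M hM : ℂ) • x := by
  obtain ⟨y, rfl, hn⟩ := exists_preim M hM x
  rw [herm_quad_re, ← hn, Finset.mul_sum] at h
  have hterm : ∀ i ∈ Finset.univ,
      (lambdaMax M hM - hM.eigenvalues i) * Complex.normSq (y i) = 0 := by
    have hsum : ∑ i, (lambdaMax M hM - hM.eigenvalues i) * Complex.normSq (y i) = 0 := by
      simp only [sub_mul]
      rw [Finset.sum_sub_distrib, ← h, sub_self]
    refine (Finset.sum_eq_zero_iff_of_nonneg fun i _ => ?_).mp hsum
    exact mul_nonneg (sub_nonneg.mpr (eigen_le_lambdaMax M hM i)) (Complex.normSq_nonneg _)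
  have hD : (diagonal (RCLike.ofReal ∘ hM.eigenvalues)) *ᵥ y = (lambdaMax M hM : ℂ) • y := by
    funext i
    rw [Matrix.mulVec_diagonal]
    rcases mul_eq_zero.mp (hterm i (Finset.mem_univ i)) with h0 | h0
    · have : hM.eigenvalues i = lambdaMax M hM := by linarith [sub_eq_zero.mp h0]
      simp [Function.comp_apply, this]
    · have : y i = 0 := Complex.normSq_eq_zero.mp h0
      simp [this]
  rw [herm_mulVec, hD, Matrix.mulVec_smul]

variable {V : Type*} [Fintype V] [DecidableEq V] {G : SimpleGraph V}

lemma conj_mul_self_eq_one {z : ℂ} (h : ‖z‖ = 1) : (starRingEnd ℂ) z * z = 1 := by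
  rw [← Complex.normSq_eq_conj_mul_self]
  have : Complex.normSq z = ‖z‖ ^ 2 := by
    rw [Complex.normSq_eq_norm_sq]
  rw [this, h]; norm_num

lemma gainOfWalk_cons {A : Matrix V V ℂ} {u v w : V} (h : G.Adj u v) (p : G.Walk v w) :
    gainOfWalk A (Walk.cons h p) = A u v * gainOfWalk A p := by
  simp [gainOfWalk, Walk.darts_cons]

lemma gainOfWalk_concat {A : Matrix V V ℂ} {u v w : V} (p : G.Walk u v) (h : G.Adj v w) :
    gainOfWalk A (p.concat h) = gainOfWalk A p * A v w := by
  simp [gainOfWalk, Walk.darts_concat]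

lemma gainOfWalk_ne_zero {A : Matrix V V ℂ} (hA : IsGainMatrix G A) {u v : V} (p : G.Walk u v) :
    gainOfWalk A p ≠ 0 := by
  induction p with
  | nil => simp [gainOfWalk]
  | cons h p ih =>
    rw [gainOfWalk_cons]
    exact mul_ne_zero (by
      have := hA.1 _ _ h
      intro h0
      rw [h0] at this
      simp at this) ih

/-- In a tree, for any edge `i ~ j`, the unique path from the root to `j` either extends
the one to `i` by the edge, or vice versa. -/
lemma tree_path_step (hT : G.IsTree) (r : V)
    (P : ∀ v, G.Walk r v) (hP : ∀ v, (P v).IsPath)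
    (hPu : ∀ v (q : G.Walk r v), q.IsPath → q = P v)
    {i j : V} (h : G.Adj i j) :
    P j = (P i).concat h ∨ P i = (P j).concat (G.adj_symm h) := by
  by_cases hj : j ∈ (P i).support
  · right
    obtain ⟨q0, _, huniq⟩ := hT.existsUnique_path j i
    have hq : ((P i).dropUntil j hj).IsPath := (hP i).dropUntil hj
    have htq : ((P i).takeUntil j hj).IsPath := (hP i).takeUntil hj
    have hsingle : (Walk.cons (G.adj_symm h) Walk.nil : G.Walk j i).IsPath := by
      rw [Walk.cons_isPath_iff]
      exact ⟨Walk.IsPath.nil, by simp [h.ne']⟩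
    have e1 : (P i).dropUntil j hj = Walk.cons (G.adj_symm h) Walk.nil :=
      (huniq _ hq).trans (huniq _ hsingle).symm
    have e3 : (P i).takeUntil j hj = P j := hPu _ _ htq
    conv_lhs => rw [← (P i).take_spec hj]
    rw [e1, e3, Walk.concat_eq_append]
  · left
    have hcons : (Walk.cons (G.adj_symm h) (P i).reverse).IsPath := by
      rw [Walk.cons_isPath_iff]
      exact ⟨(hP i).reverse, by simpa [Walk.support_reverse] using hj⟩
    have hconcat : ((P i).concat h).IsPath := by
      have := hcons.reverse
      rwa [Walk.reverse_cons, Walk.reverse_reverse] at this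
    exact (hPu _ _ hconcat).symm

theorem tree_switching (hT : G.IsTree) [Nonempty V] {A₁ A₂ : Matrix V V ℂ}
    (h₁ : IsGainMatrix G A₁) (h₂ : IsGainMatrix G A₂) :
    ∃ ζ : V → ℂ, (∀ v, ζ v ≠ 0) ∧ ∀ i j, A₂ i j = (ζ i)⁻¹ * A₁ i j * ζ j := by
  classical
  obtain ⟨r⟩ := (inferInstance : Nonempty V)
  have hEU := hT.existsUnique_path
  set P : ∀ v, G.Walk r v := fun v => (hEU r v).choose with hPdef
  have hP : ∀ v, (P v).IsPath := fun v => (hEU r v).choose_spec.1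
  have hPu : ∀ v (q : G.Walk r v), q.IsPath → q = P v :=
    fun v q hq => (hEU r v).choose_spec.2 q hq
  set ζ : V → ℂ := fun v =>
    gainOfWalk A₂ (P v) * (starRingEnd ℂ) (gainOfWalk A₁ (P v)) with hζdef
  have hζ0 : ∀ v, ζ v ≠ 0 := fun v =>
    mul_ne_zero (gainOfWalk_ne_zero h₂ _) (by
      simpa using (gainOfWalk_ne_zero h₁ (P v)))
  have hcross : ∀ i j, G.Adj i j → ζ i * A₂ i j = A₁ i j * ζ j := by
    intro i j h
    have hA1 := conj_mul_self_eq_one (h₁.1 i j h)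
    have hA2 := conj_mul_self_eq_one (h₂.1 i j h)
    rcases tree_path_step hT r P hP hPu h with hc | hc
    · have g1 : gainOfWalk A₁ (P j) = gainOfWalk A₁ (P i) * A₁ i j := by
        rw [hc, gainOfWalk_concat]
      have g2 : gainOfWalk A₂ (P j) = gainOfWalk A₂ (P i) * A₂ i j := by
        rw [hc, gainOfWalk_concat]
      simp only [hζdef]
      rw [g1, g2, _root_.map_mul]
      calc gainOfWalk A₂ (P i) * (starRingEnd ℂ) (gainOfWalk A₁ (P i)) * A₂ i j
          = gainOfWalk A₂ (P i) * (starRingEnd ℂ) (gainOfWalk A₁ (P i)) * A₂ i j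
            * ((starRingEnd ℂ) (A₁ i j) * A₁ i j) := by rw [hA1, mul_one]
        _ = A₁ i j * (gainOfWalk A₂ (P i) * A₂ i j
            * ((starRingEnd ℂ) (gainOfWalk A₁ (P i)) * (starRingEnd ℂ) (A₁ i j))) := by ring
    · have g1 : gainOfWalk A₁ (P i) = gainOfWalk A₁ (P j) * (starRingEnd ℂ) (A₁ i j) := by
        rw [hc, gainOfWalk_concat, h₁.2.2]
      have g2 : gainOfWalk A₂ (P i) = gainOfWalk A₂ (P j) * (starRingEnd ℂ) (A₂ i j) := by
        rw [hc, gainOfWalk_concat, h₂.2.2]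
      simp only [hζdef]
      rw [g1, g2, _root_.map_mul, Complex.conj_conj]
      calc gainOfWalk A₂ (P j) * (starRingEnd ℂ) (A₂ i j)
            * ((starRingEnd ℂ) (gainOfWalk A₁ (P j)) * A₁ i j) * A₂ i j
          = A₁ i j * (gainOfWalk A₂ (P j) * (starRingEnd ℂ) (gainOfWalk A₁ (P j)))
            * ((starRingEnd ℂ) (A₂ i j) * A₂ i j) := by ring
        _ = A₁ i j * (gainOfWalk A₂ (P j) * (starRingEnd ℂ) (gainOfWalk A₁ (P j))) := by
            rw [hA2, mul_one]
  refine ⟨ζ, hζ0, fun i j => ?_⟩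
  by_cases h : G.Adj i j
  · have hcr := hcross i j h
    symm
    calc (ζ i)⁻¹ * A₁ i j * ζ j = (ζ i)⁻¹ * (ζ i * A₂ i j) := by rw [mul_assoc, ← hcr]
      _ = A₂ i j := by rw [← mul_assoc, inv_mul_cancel₀ (hζ0 i), one_mul]
  · rw [h₁.2.1 i j h, h₂.2.1 i j h, mul_zero, zero_mul]



open Classical in
/-- The all-ones adjacency gain matrix. -/
noncomputable def adjG {V : Type*} (G : SimpleGraph V) : Matrix V V ℂ :=
  fun i j => if G.Adj i j then 1 else 0

lemma adjG_isGain : IsGainMatrix G (adjG G) := by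
  classical
  refine ⟨fun i j h => by simp [adjG, h], fun i j h => by simp [adjG, h], fun i j => ?_⟩
  by_cases h : G.Adj i j
  · simp [adjG, h, G.adj_comm i j |>.mp h]
  · have h' : ¬ G.Adj j i := fun hc => h (G.adj_symm hc)
    simp [adjG, h, h']

lemma adjG_eq_norm {A : Matrix V V ℂ} (hA : IsGainMatrix G A) (i j : V) :
    adjG G i j = (‖A i j‖ : ℂ) := by
  classical
  by_cases h : G.Adj i j
  · simp [adjG, h, hA.1 i j h]
  · simp [adjG, h, hA.2.1 i j h]

lemma eigBasis_normSq_one (M : Matrix V V ℂ) (hM : M.IsHermitian) (i : V) :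
    ∑ v, Complex.normSq (hM.eigenvectorBasis i v) = 1 := by
  have h1 : ‖hM.eigenvectorBasis i‖ = 1 := hM.eigenvectorBasis.orthonormal.1 i
  rw [EuclideanSpace.norm_eq] at h1
  have h2 : ∑ v, ‖hM.eigenvectorBasis i v‖ ^ 2 = 1 := by
    have := Real.sqrt_eq_one.mp h1
    exact this
  rw [← h2]
  refine Finset.sum_congr rfl fun v _ => ?_
  rw [← Complex.sq_norm]

lemma star_dot_self (x : V → ℂ) :
    star x ⬝ᵥ x = ((∑ i, Complex.normSq (x i) : ℝ) : ℂ) := by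
  simp only [dotProduct, Pi.star_apply, RCLike.star_def]
  push_cast
  refine Finset.sum_congr rfl fun i _ => ?_
  rw [Complex.normSq_eq_conj_mul_self]

lemma quad_eigen (M : Matrix V V ℂ) (hM : M.IsHermitian) (i : V) :
    star (⇑(hM.eigenvectorBasis i)) ⬝ᵥ (M *ᵥ ⇑(hM.eigenvectorBasis i))
      = ((hM.eigenvalues i : ℝ) : ℂ) := by
  rw [hM.mulVec_eigenvectorBasis]
  have : star (⇑(hM.eigenvectorBasis i)) ⬝ᵥ (hM.eigenvalues i • ⇑(hM.eigenvectorBasis i))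
      = ((hM.eigenvalues i : ℝ) : ℂ) * (star (⇑(hM.eigenvectorBasis i)) ⬝ᵥ ⇑(hM.eigenvectorBasis i)) := by
    simp only [dotProduct, Pi.smul_apply, Finset.mul_sum]
    refine Finset.sum_congr rfl fun v _ => ?_
    rw [Complex.real_smul]
    ring
  rw [this, star_dot_self]
  rw [eigBasis_normSq_one]
  norm_num


lemma dot_abs_le (x z : V → ℂ) : ‖star x ⬝ᵥ z‖ ≤ ∑ i, ‖x i‖ * ‖z i‖ := by
  refine (norm_sum_le _ _).trans ?_
  refine le_of_eq (Finset.sum_congr rfl fun i _ => ?_)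
  rw [Pi.star_apply, norm_mul, norm_star]

lemma mulVec_abs_le (A : Matrix V V ℂ) (x : V → ℂ) (i : V) :
    ‖(A *ᵥ x) i‖ ≤ ∑ j, ‖A i j‖ * ‖x j‖ := by
  refine (norm_sum_le _ _).trans ?_
  refine le_of_eq (Finset.sum_congr rfl fun j _ => ?_)
  rw [norm_mul]

lemma S2_eq {A : Matrix V V ℂ} (hA : IsGainMatrix G A) (x : V → ℂ) :
    (star (fun v => ((‖x v‖ : ℝ) : ℂ)) ⬝ᵥ ((adjG G) *ᵥ (fun v => ((‖x v‖ : ℝ) : ℂ)))).re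
      = ∑ i, ‖x i‖ * ∑ j, ‖A i j‖ * ‖x j‖ := by
  have key : star (fun v => ((‖x v‖ : ℝ) : ℂ)) ⬝ᵥ ((adjG G) *ᵥ (fun v => ((‖x v‖ : ℝ) : ℂ)))
      = ((∑ i, ‖x i‖ * ∑ j, ‖A i j‖ * ‖x j‖ : ℝ) : ℂ) := by
    calc star (fun v => ((‖x v‖ : ℝ) : ℂ)) ⬝ᵥ ((adjG G) *ᵥ (fun v => ((‖x v‖ : ℝ) : ℂ)))
        = ∑ i, ((‖x i‖ : ℝ) : ℂ) * ∑ j, adjG G i j * ((‖x j‖ : ℝ) : ℂ) := by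
          simp only [dotProduct, Matrix.mulVec, Pi.star_apply, RCLike.star_def,
            Complex.conj_ofReal]
      _ = ∑ i, ((‖x i‖ : ℝ) : ℂ) * ∑ j, ((‖A i j‖ : ℝ) : ℂ) * ((‖x j‖ : ℝ) : ℂ) := by
          refine Finset.sum_congr rfl fun i _ => ?_
          congr 1
          exact Finset.sum_congr rfl fun j _ => by rw [adjG_eq_norm hA]
      _ = ((∑ i, ‖x i‖ * ∑ j, ‖A i j‖ * ‖x j‖ : ℝ) : ℂ) := by push_cast; ring
  rw [key, Complex.ofReal_re]

lemma normSq_norm_eq (x : V → ℂ) :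
    ∑ v, Complex.normSq ((‖x v‖ : ℂ)) = ∑ v, Complex.normSq (x v) := by
  refine Finset.sum_congr rfl fun v _ => ?_
  rw [Complex.normSq_ofReal, ← Complex.sq_norm]
  ring

lemma gain_eig_le [Nonempty V] {A : Matrix V V ℂ} (hA : IsGainMatrix G A) (hH : A.IsHermitian)
    (hadjH : (adjG G).IsHermitian) (i : V) :
    |hH.eigenvalues i| ≤ lambdaMax (adjG G) hadjH := by
  set x : V → ℂ := ⇑(hH.eigenvectorBasis i) with hxdef
  set y : V → ℂ := fun v => ((‖x v‖ : ℝ) : ℂ) with hydef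
  have hnorm : ∑ v, Complex.normSq (x v) = 1 := by
    have := eigBasis_normSq_one A hH i
    simpa [hxdef] using this
  calc |hH.eigenvalues i| = ‖star x ⬝ᵥ (A *ᵥ x)‖ := by
        rw [quad_eigen A hH i]
        simp [Complex.norm_real]
    _ ≤ ∑ v, ‖x v‖ * ‖(A *ᵥ x) v‖ := dot_abs_le x _
    _ ≤ ∑ v, ‖x v‖ * ∑ j, ‖A v j‖ * ‖x j‖ := by
        refine Finset.sum_le_sum fun v _ => ?_
        exact mul_le_mul_of_nonneg_left (mulVec_abs_le A x v) (norm_nonneg _)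
    _ = (star y ⬝ᵥ ((adjG G) *ᵥ y)).re := (S2_eq hA x).symm
    _ ≤ lambdaMax (adjG G) hadjH * ∑ v, Complex.normSq (y v) := rayleigh_le _ hadjH y
    _ = lambdaMax (adjG G) hadjH := by
        rw [hydef]
        simp only []
        rw [normSq_norm_eq x, hnorm, mul_one]

lemma specRad_adjG_eq [Nonempty V] (hadjH : (adjG G).IsHermitian) :
    specRad (adjG G) hadjH = lambdaMax (adjG G) hadjH := by
  apply le_antisymm
  · exact ciSup_le fun i => gain_eig_le adjG_isGain hadjH hadjH i
  · obtain ⟨i₀, hi₀⟩ := exists_eq_ciSup_of_finite (f := hadjH.eigenvalues)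
    calc lambdaMax (adjG G) hadjH = hadjH.eigenvalues i₀ := hi₀.symm
      _ ≤ |hadjH.eigenvalues i₀| := le_abs_self _
      _ ≤ specRad (adjG G) hadjH :=
          le_ciSup (f := fun i => |hadjH.eigenvalues i|)
            (Set.Finite.bddAbove (Set.finite_range _)) i₀

lemma lambdaMax_adjG_pos [Nonempty V] (hadjH : (adjG G).IsHermitian) {u w : V}
    (h : G.Adj u w) : 0 < lambdaMax (adjG G) hadjH := by
  classical
  by_contra hle
  push_neg at hle
  have hall : ∀ i, hadjH.eigenvalues i ≤ 0 :=
    fun i => (eigen_le_lambdaMax _ hadjH i).trans hle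
  have htr : ∑ i, hadjH.eigenvalues i = 0 := by
    have h1 : (adjG G).trace = 0 := by
      simp [Matrix.trace, Matrix.diag, adjG]
    have h2 : (adjG G).trace = ((∑ i, hadjH.eigenvalues i : ℝ) : ℂ) := by
      conv_lhs => rw [hadjH.spectral_theorem, Unitary.conjStarAlgAut_apply]
      rw [Matrix.trace_mul_cycle]
      rw [Matrix.mem_unitaryGroup_iff'.mp hadjH.eigenvectorUnitary.2, one_mul]
      simp [Matrix.trace, Matrix.diag]
    rw [h1] at h2
    exact_mod_cast h2.symm
  have hzero : ∀ i ∈ Finset.univ, hadjH.eigenvalues i = 0 := by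
    intro i hi
    have := (Finset.sum_eq_zero_iff_of_nonpos (fun j _ => hall j)).mp htr
    exact this i hi
  have hD : diagonal (RCLike.ofReal ∘ hadjH.eigenvalues) = (0 : Matrix V V ℂ) := by
    ext i j
    by_cases hij : i = j <;> simp [diagonal, hij, hzero i (Finset.mem_univ i)]
    · exact_mod_cast congrArg (fun t : ℝ => (t : ℂ)) (hzero j (Finset.mem_univ j))
  have : adjG G = 0 := by
    conv_lhs => rw [hadjH.spectral_theorem, Unitary.conjStarAlgAut_apply]
    rw [hD, Matrix.mul_zero, Matrix.zero_mul]
  have := congrFun (congrFun this u) w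
  simp [adjG, h] at this


lemma perron_pos (hG : G.Connected) {x : V → ℂ} {c : ℝ}
    (heig : (adjG G) *ᵥ (fun v => ((‖x v‖ : ℝ) : ℂ)) = (c : ℂ) • (fun v => ((‖x v‖ : ℝ) : ℂ)))
    (hx : x ≠ 0) : ∀ v, x v ≠ 0 := by
  classical
  have key : ∀ a b, G.Adj a b → x a = 0 → x b = 0 := by
    intro a b hab ha
    have h0 : ((adjG G) *ᵥ (fun v => ((‖x v‖ : ℝ) : ℂ))) a = 0 := by
      rw [heig]
      simp [ha]
    have h1 : ((∑ j, (if G.Adj a j then (1:ℝ) else 0) * ‖x j‖ : ℝ) : ℂ) = 0 := by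
      rw [← h0]
      simp only [Matrix.mulVec, dotProduct]
      push_cast
      refine (Finset.sum_congr rfl fun j _ => ?_).symm
      by_cases hj : G.Adj a j <;> simp [adjG, hj]
    have h2 : ∑ j, (if G.Adj a j then (1:ℝ) else 0) * ‖x j‖ = 0 := by exact_mod_cast h1
    have h3 := (Finset.sum_eq_zero_iff_of_nonneg (fun j _ => by positivity)).mp h2
    have := h3 b (Finset.mem_univ b)
    rw [if_pos hab, one_mul] at this
    exact norm_eq_zero.mp this
  have walkprop : ∀ a b, (G.Walk a b) → x a = 0 → x b = 0 := by
    intro a b p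
    induction p with
    | nil => exact id
    | cons h q ih => exact fun ha => ih (key _ _ h ha)
  intro v hv
  obtain ⟨w, hw⟩ := Function.ne_iff.mp hx
  exact hw (walkprop v w (hG.preconnected v w).some hv)

lemma re_eq_abs_imp {z : ℂ} (h : z.re = ‖z‖) :
    z = ((‖z‖ : ℝ) : ℂ) := by
  have h2 : ‖z‖ ^ 2 = z.re ^ 2 + z.im ^ 2 := by
    rw [Complex.sq_norm, Complex.normSq_apply]; ring
  have h3 : z.re ^ 2 = ‖z‖ ^ 2 := by rw [h]
  have him : z.im = 0 := by nlinarith [sq_nonneg z.im]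
  apply Complex.ext
  · simp [h]
  · simp [him]

lemma triangle_eq {z : V → ℂ} (h : ‖(∑ j, z j)‖ = ∑ j, ‖(z j)‖)
    (hs : (∑ j, z j) ≠ 0) (j : V) :
    ((‖(∑ k, z k)‖ : ℝ) : ℂ) * z j
      = ((‖(z j)‖ : ℝ) : ℂ) * (∑ k, z k) := by
  classical
  set S := ∑ k, z k with hS
  have hsum : ∑ k, ((starRingEnd ℂ) S * z k).re = ‖S‖ * ∑ k, ‖(z k)‖ := by
    have h1 : (starRingEnd ℂ) S * S = ((‖S‖ ^ 2 : ℝ) : ℂ) := by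
      rw [mul_comm, Complex.mul_conj]
      norm_cast
      rw [Complex.sq_norm]
    calc ∑ k, ((starRingEnd ℂ) S * z k).re = ((starRingEnd ℂ) S * ∑ k, z k).re := by
          rw [Finset.mul_sum, Complex.re_sum]
      _ = ‖S‖ * ∑ k, ‖(z k)‖ := by
          rw [← hS, h1, Complex.ofReal_re, ← h]; ring
  have hterm : ∀ k ∈ Finset.univ, ‖S‖ * ‖(z k)‖
      - ((starRingEnd ℂ) S * z k).re = 0 := by
    refine (Finset.sum_eq_zero_iff_of_nonneg fun k _ => ?_).mp ?_
    · rw [sub_nonneg]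
      calc ((starRingEnd ℂ) S * z k).re ≤ ‖((starRingEnd ℂ) S * z k)‖ :=
            Complex.re_le_norm _
        _ = ‖S‖ * ‖(z k)‖ := by
            rw [norm_mul, Complex.norm_conj]
    · rw [Finset.sum_sub_distrib, hsum, Finset.mul_sum, sub_self]
  have hj := hterm j (Finset.mem_univ j)
  have hre : ((starRingEnd ℂ) S * z j).re = ‖((starRingEnd ℂ) S * z j)‖ := by
    rw [norm_mul, Complex.norm_conj]
    linarith [sub_eq_zero.mp (by linarith [hj] : ‖S‖ * ‖(z j)‖ - ((starRingEnd ℂ) S * z j).re = 0)]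
  have heq := re_eq_abs_imp hre
  rw [norm_mul, Complex.norm_conj] at heq
  have habs0 : ‖S‖ ≠ 0 := by
    simpa using hs
  have hkey : S * ((starRingEnd ℂ) S * z j) = S * (((‖S‖ * ‖(z j)‖ : ℝ) : ℂ)) := by
    rw [heq]
  have hSS : S * (starRingEnd ℂ) S = ((‖S‖ ^ 2 : ℝ) : ℂ) := by
    rw [Complex.mul_conj]
    norm_cast
    rw [Complex.sq_norm]
  have expand : ((‖S‖ : ℝ) : ℂ) * (((‖S‖ : ℝ) : ℂ) * z j)
      = ((‖S‖ : ℝ) : ℂ) * (((‖(z j)‖ : ℝ) : ℂ) * S) := by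
    calc ((‖S‖ : ℝ) : ℂ) * (((‖S‖ : ℝ) : ℂ) * z j)
        = ((‖S‖ ^ 2 : ℝ) : ℂ) * z j := by push_cast; ring
      _ = (S * (starRingEnd ℂ) S) * z j := by rw [hSS]
      _ = S * ((starRingEnd ℂ) S * z j) := by ring
      _ = S * (((‖S‖ * ‖(z j)‖ : ℝ) : ℂ)) := hkey
      _ = ((‖S‖ : ℝ) : ℂ) * (((‖(z j)‖ : ℝ) : ℂ) * S) := by push_cast; ring
  have hne : ((‖S‖ : ℝ) : ℂ) ≠ 0 := by exact_mod_cast habs0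
  exact mul_left_cancel₀ hne expand


lemma not_tree_spec_ne [Nonempty V] (hG : G.Connected) (hnt : ¬ G.IsTree) :
    ∃ (A : Matrix V V ℂ), IsGainMatrix G A ∧ ∀ (hH : A.IsHermitian) (hadjH : (adjG G).IsHermitian),
      specRad A hH ≠ specRad (adjG G) hadjH := by
  classical
  have hnac : ¬ G.IsAcyclic := fun hac => hnt ⟨hG, hac⟩
  obtain ⟨u, w, hadj, hnb⟩ : ∃ u w, G.Adj u w ∧ ¬ G.IsBridge s(u, w) := by
    by_contra hforall
    push_neg at hforall
    exact hnac (SimpleGraph.isAcyclic_iff_forall_adj_isBridge.mpr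
      fun v w h => hforall v w h)
  have hne : u ≠ w := hadj.ne
  have hreach : (G \ SimpleGraph.fromEdgeSet {s(u, w)}).Reachable u w := by
    by_contra hr
    exact hnb (SimpleGraph.isBridge_iff.mpr hr)
  obtain ⟨p, hp⟩ : ∃ p : G.Walk u w, s(u, w) ∉ p.edges :=
    SimpleGraph.reachable_delete_edges_iff_exists_walk.mp hreach
  set B : Matrix V V ℂ := fun i j =>
    if i = u ∧ j = w then Complex.I else if i = w ∧ j = u then -Complex.I
    else adjG G i j with hBdef
  have hBuw : B u w = Complex.I := by
    simp [hBdef]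
  have hBadj : ∀ i j, G.Adj i j → ‖B i j‖ = 1 := by
    intro i j h
    by_cases h1 : i = u ∧ j = w
    · simp [hBdef, h1]
    · by_cases h2 : i = w ∧ j = u
      · obtain ⟨rfl, rfl⟩ := h2
        simp [hBdef, hne, hne.symm]
      · simp only [hBdef, if_neg h1, if_neg h2]
        simp [adjG, h]
  have hBzero : ∀ i j, ¬G.Adj i j → B i j = 0 := by
    intro i j h
    have h1 : ¬(i = u ∧ j = w) := by rintro ⟨rfl, rfl⟩; exact h hadj
    have h2 : ¬(i = w ∧ j = u) := by rintro ⟨rfl, rfl⟩; exact h (G.adj_symm hadj)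
    simp only [hBdef, if_neg h1, if_neg h2]
    simp [adjG, h]
  have hBsymm : ∀ i j, B j i = (starRingEnd ℂ) (B i j) := by
    intro i j
    by_cases h1 : i = u ∧ j = w
    · obtain ⟨rfl, rfl⟩ := h1
      simp [hBdef, hne, hne.symm, Complex.conj_I]
    · by_cases h2 : i = w ∧ j = u
      · obtain ⟨rfl, rfl⟩ := h2
        simp [hBdef, hne, hne.symm, Complex.conj_I]
      · have h1' : ¬(j = u ∧ i = w) := fun hc => h2 ⟨hc.2, hc.1⟩
        have h2' : ¬(j = w ∧ i = u) := fun hc => h1 ⟨hc.2, hc.1⟩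
        simp only [hBdef, if_neg h1', if_neg h2', if_neg h1, if_neg h2]
        exact (adjG_isGain).2.2 i j
  have hBgain : IsGainMatrix G B := ⟨hBadj, hBzero, hBsymm⟩
  have hBpath : ∀ a b, G.Adj a b → s(a, b) ≠ s(u, w) → B a b = 1 := by
    intro a b h hne2
    have h1 : ¬(a = u ∧ b = w) := by
      rintro ⟨rfl, rfl⟩; exact hne2 rfl
    have h2 : ¬(a = w ∧ b = u) := by
      rintro ⟨rfl, rfl⟩; exact hne2 (Sym2.eq_swap)
    simp only [hBdef, if_neg h1, if_neg h2]
    simp [adjG, h]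
  refine ⟨B, hBgain, fun hH hadjH => ?_⟩
  intro heq
  set ρ := lambdaMax (adjG G) hadjH with hρdef
  have hρpos : 0 < ρ := lambdaMax_adjG_pos hadjH hadj
  have hspec : specRad B hH = ρ := by rw [heq, specRad_adjG_eq]
  obtain ⟨i₀, hi₀⟩ := exists_eq_ciSup_of_finite (f := fun i => |hH.eigenvalues i|)
  set μ := hH.eigenvalues i₀ with hμdef
  have hμabs : |μ| = ρ := by
    rw [← hspec]; exact hi₀
  have hμne : μ ≠ 0 := by
    intro h0
    rw [h0, abs_zero] at hμabs
    exact absurd hμabs.symm (ne_of_gt hρpos)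
  have hμcne : ((μ : ℝ) : ℂ) ≠ 0 := by exact_mod_cast hμne
  set x : V → ℂ := ⇑(hH.eigenvectorBasis i₀) with hxdef
  have hxnorm : ∑ v, Complex.normSq (x v) = 1 := by
    have := eigBasis_normSq_one B hH i₀
    simpa [hxdef] using this
  have heig : B *ᵥ x = μ • x := hH.mulVec_eigenvectorBasis i₀
  have hx0 : x ≠ 0 := by
    intro h0
    rw [h0] at hxnorm
    simp at hxnorm
  set y : V → ℂ := fun v => ((‖x v‖ : ℝ) : ℂ) with hydef
  have hyn : ∑ v, Complex.normSq (y v) = 1 := by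
    rw [hydef]
    simp only []
    rw [normSq_norm_eq x, hxnorm]
  -- the equality chain
  have hS0 : ‖star x ⬝ᵥ (B *ᵥ x)‖ = ρ := by
    rw [hxdef]
    rw [quad_eigen B hH i₀]
    rw [Complex.norm_real]
    exact hμabs
  have hS1le : ‖star x ⬝ᵥ (B *ᵥ x)‖ ≤ ∑ v, ‖x v‖ * ‖(B *ᵥ x) v‖ := dot_abs_le x _
  have hS12 : ∑ v, ‖x v‖ * ‖(B *ᵥ x) v‖ ≤ ∑ v, ‖x v‖ * ∑ j, ‖B v j‖ * ‖x j‖ :=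
    Finset.sum_le_sum fun v _ =>
      mul_le_mul_of_nonneg_left (mulVec_abs_le B x v) (norm_nonneg _)
  have hS2 : ∑ v, ‖x v‖ * ∑ j, ‖B v j‖ * ‖x j‖ = (star y ⬝ᵥ ((adjG G) *ᵥ y)).re :=
    (S2_eq hBgain x).symm
  have hS2le : (star y ⬝ᵥ ((adjG G) *ᵥ y)).re ≤ ρ := by
    have := rayleigh_le (adjG G) hadjH y
    rw [hyn, mul_one] at this
    exact this
  have hS2eq : (star y ⬝ᵥ ((adjG G) *ᵥ y)).re = ρ * ∑ v, Complex.normSq (y v) := by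
    rw [hyn, mul_one]
    linarith [hS0 ▸ hS1le, hS12, hS2 ▸ le_refl ((star y ⬝ᵥ ((adjG G) *ᵥ y)).re)]
  have heigy : (adjG G) *ᵥ y = ((ρ : ℝ) : ℂ) • y := rayleigh_eq_case (adjG G) hadjH y hS2eq
  have hpos : ∀ v, x v ≠ 0 := by
    refine perron_pos (c := ρ) hG ?_ hx0
    rw [hydef] at heigy
    exact heigy
  have hnormpos : ∀ v, (0 : ℝ) < ‖x v‖ := fun v => norm_pos_iff.mpr (hpos v)
  -- termwise equality of the middle inequality
  have hS1eq : ∑ v, ‖x v‖ * ‖(B *ᵥ x) v‖ = ∑ v, ‖x v‖ * ∑ j, ‖B v j‖ * ‖x j‖ := by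
    have hchain : (∑ v, ‖x v‖ * ∑ j, ‖B v j‖ * ‖x j‖) = ρ := by
      rw [hS2]
      linarith [hS0 ▸ hS1le, hS12, hS2le, hS2eq, hyn ▸ hS2eq]
    have h1 : ρ ≤ ∑ v, ‖x v‖ * ‖(B *ᵥ x) v‖ := hS0 ▸ hS1le
    linarith [hS12, hchain]
  have hrow : ∀ v, ‖(B *ᵥ x) v‖ = ∑ j, ‖B v j‖ * ‖x j‖ := by
    intro v
    have hterm := (Finset.sum_eq_zero_iff_of_nonneg (fun v _ => by
        have := mulVec_abs_le B x v
        have hn := norm_nonneg (x v)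
        nlinarith)).mp (by
      rw [Finset.sum_sub_distrib, hS1eq, sub_self] :
        ∑ v, (‖x v‖ * (∑ j, ‖B v j‖ * ‖x j‖) - ‖x v‖ * ‖(B *ᵥ x) v‖) = 0)
    have hv := hterm v (Finset.mem_univ v)
    have := sub_eq_zero.mp hv
    exact (mul_left_cancel₀ (ne_of_gt (hnormpos v)) this).symm
  -- triangle equality per row
  have hrel : ∀ a b, G.Adj a b →
      ((ρ * ‖x a‖ : ℝ) : ℂ) * (B a b * x b)
        = ((‖x b‖ : ℝ) : ℂ) * (((μ : ℝ) : ℂ) * x a) := by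
    intro a b hab
    have hz : ∑ j, B a j * x j = ((μ : ℝ) : ℂ) * x a := by
      have := congrFun heig a
      simpa [Matrix.mulVec, dotProduct, Pi.smul_apply, Complex.real_smul] using this
    have hzBx : ∑ j, B a j * x j = (B *ᵥ x) a := by
      simp [Matrix.mulVec, dotProduct]
    have habs : ‖(∑ j, B a j * x j)‖ = ∑ j, ‖(B a j * x j)‖ := by
      rw [hzBx]
      have h1 : ‖((B *ᵥ x) a)‖ = ‖(B *ᵥ x) a‖ := rfl
      rw [h1, hrow a]
      refine Finset.sum_congr rfl fun j _ => ?_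
      rw [norm_mul]
    have hs : (∑ j, B a j * x j) ≠ 0 := by
      rw [hz]
      exact mul_ne_zero hμcne (hpos a)
    have htr := triangle_eq habs hs b
    have habsS : ‖(∑ k, B a k * x k)‖ = ρ * ‖x a‖ := by
      rw [hz, norm_mul, Complex.norm_real, Real.norm_eq_abs, hμabs]
    have habsb : ‖(B a b * x b)‖ = ‖x b‖ := by
      rw [norm_mul, hBadj a b hab, one_mul]
    rw [habsS, habsb, hz] at htr
    exact htr
  -- walk induction: gains along edge-avoiding walks
  have hwalk : ∀ (a b : V) (q : G.Walk a b), s(u, w) ∉ q.edges →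
      (((ρ ^ q.length : ℝ)) : ℂ) * ((‖x a‖ : ℝ) : ℂ) * x b
        = (((μ ^ q.length : ℝ)) : ℂ) * ((‖x b‖ : ℝ) : ℂ) * x a := by
    intro a b q
    induction q with
    | nil => intro _; simp
    | @cons a c b h q ih =>
      intro hnotin
      rw [SimpleGraph.Walk.edges_cons] at hnotin
      have hne1 : s(a, c) ≠ s(u, w) := fun hcc => hnotin (by rw [hcc]; exact List.mem_cons_self)
      have hnq : s(u, w) ∉ q.edges := fun hcc => hnotin (List.mem_cons_of_mem _ hcc)
      have h1 := hrel a c h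
      rw [hBpath a c h hne1, one_mul] at h1
      have h2 := ih hnq
      rw [SimpleGraph.Walk.length_cons]
      have hnc : ((‖x c‖ : ℝ) : ℂ) ≠ 0 := by
        exact_mod_cast ne_of_gt (hnormpos c)
      refine mul_left_cancel₀ hnc ?_
      push_cast at h1 h2 ⊢
      linear_combination (((μ : ℝ) : ℂ) ^ q.length * ((‖x b‖ : ℝ) : ℂ)) * h1
        + (((ρ : ℝ) : ℂ) * ((‖x a‖ : ℝ) : ℂ)) * h2
  -- combine the special edge with the walk
  have hW := hwalk u w p hp
  have hR2 := hrel u w hadj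
  rw [hBuw] at hR2
  have hfac : (Complex.I * (((ρ : ℝ) : ℂ) * (((μ : ℝ) : ℂ)) ^ p.length)
        - (((ρ : ℝ) : ℂ)) ^ p.length * ((μ : ℝ) : ℂ))
      * (x u * (((‖x u‖ : ℝ) : ℂ) * ((‖x w‖ : ℝ) : ℂ))) = 0 := by
    push_cast at hW hR2
    linear_combination (-Complex.I * ((ρ : ℝ) : ℂ) * ((‖x u‖ : ℝ) : ℂ)) * hW
      + ((((ρ : ℝ) : ℂ)) ^ p.length * ((‖x u‖ : ℝ) : ℂ)) * hR2
  rcases mul_eq_zero.mp hfac with h0 | h0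
  · have hXY : Complex.I * (((ρ * μ ^ p.length : ℝ)) : ℂ)
        = (((ρ ^ p.length * μ : ℝ)) : ℂ) := by
      push_cast
      linear_combination h0
    have him := congrArg Complex.im hXY
    simp only [Complex.mul_im, Complex.I_re, Complex.I_im, Complex.ofReal_re,
      Complex.ofReal_im, zero_mul, one_mul, zero_add, mul_zero] at him
    exact absurd him (mul_ne_zero (ne_of_gt hρpos) (pow_ne_zero _ hμne))
  · have : x u * (((‖x u‖ : ℝ) : ℂ) * ((‖x w‖ : ℝ) : ℂ)) ≠ 0 :=
      mul_ne_zero (hpos u) (mul_ne_zero (by exact_mod_cast ne_of_gt (hnormpos u))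
        (by exact_mod_cast ne_of_gt (hnormpos w)))
    exact this h0


lemma tree_charpoly [Nonempty V] (hT : G.IsTree) {A₁ A₂ : Matrix V V ℂ}
    (h₁ : IsGainMatrix G A₁) (h₂ : IsGainMatrix G A₂) : A₁.charpoly = A₂.charpoly := by
  obtain ⟨ζ, hζ0, hrel⟩ := tree_switching hT h₁ h₂
  have hA2 : A₂ = diagonal (fun v => (ζ v)⁻¹) * A₁ * diagonal ζ := by
    ext i j
    rw [Matrix.mul_diagonal, Matrix.diagonal_mul]
    exact hrel i j
  have hPQ : diagonal (fun v => (ζ v)⁻¹) * diagonal ζ = 1 := by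
    rw [Matrix.diagonal_mul_diagonal]
    have : (fun v => (ζ v)⁻¹ * ζ v) = fun _ => (1 : ℂ) := by
      funext v
      exact inv_mul_cancel₀ (hζ0 v)
    rw [this, Matrix.diagonal_one]
  rw [hA2, charpoly_conj_eq _ _ _ hPQ]

end Aux

/-- `G` is a tree iff any two gain matrices on `G` have the same characteristic polynomial,
iff any two gain matrices on `G` have the same spectral radius. -/
theorem stmt_5 {V : Type*} [Fintype V] [Nonempty V] [DecidableEq V]
    (G : SimpleGraph V) (hG : G.Connected) :
    (G.IsTree ↔ ∀ A₁ A₂ : Matrix V V ℂ,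
        IsGainMatrix G A₁ → IsGainMatrix G A₂ → A₁.charpoly = A₂.charpoly) ∧
    (G.IsTree ↔ ∀ (A₁ A₂ : Matrix V V ℂ) (h₁ : IsGainMatrix G A₁) (h₂ : IsGainMatrix G A₂),
        specRad A₁ h₁.isHermitian = specRad A₂ h₂.isHermitian) := by
  have main1 : G.IsTree → ∀ A₁ A₂ : Matrix V V ℂ,
      IsGainMatrix G A₁ → IsGainMatrix G A₂ → A₁.charpoly = A₂.charpoly :=
    fun hT A₁ A₂ h₁ h₂ => tree_charpoly hT h₁ h₂
  have main3 : (∀ (A₁ A₂ : Matrix V V ℂ) (h₁ : IsGainMatrix G A₁) (h₂ : IsGainMatrix G A₂),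
      specRad A₁ h₁.isHermitian = specRad A₂ h₂.isHermitian) → G.IsTree := by
    intro hspec
    by_contra hnt
    obtain ⟨A, hA, hne⟩ := not_tree_spec_ne hG hnt
    exact hne hA.isHermitian (adjG_isGain).isHermitian
      (hspec A (adjG G) hA adjG_isGain)
  refine ⟨⟨main1, ?_⟩, ⟨?_, main3⟩⟩
  · intro h
    apply main3
    intro A₁ A₂ h₁ h₂
    exact specRad_eq_of_charpoly_eq _ _ _ _ (h A₁ A₂ h₁ h₂)
  · intro hT A₁ A₂ h₁ h₂
    exact specRad_eq_of_charpoly_eq _ _ _ _ (main1 hT A₁ A₂ h₁ h₂)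
end

section
/- Let G be the complete graph on the vertex set Fin 4 (i.e., G = ⊤ : SimpleGraph (Fin 4), the graph K₄). Then every gain matrix A on G is switching equivalent to a gain matrix B on G all of whose entries have nonnegative real part, i.e., 0 ≤ (B i j).re for all i, j. -/
open SimpleGraph

private lemma unit_conj_mul {u : ℂ} (hu : ‖u‖ = 1) : (starRingEnd ℂ) u * u = 1 := by
  rw [mul_comm, Complex.mul_conj, Complex.normSq_eq_norm_sq, hu]
  norm_num

private lemma I_pow_mod4 (m : ℕ) : Complex.I ^ m = Complex.I ^ (m % 4) := by
  conv_lhs => rw [← Nat.div_add_mod m 4]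
  rw [pow_add, pow_mul, Complex.I_pow_four, one_pow, one_mul]

private lemma I_zval_sub_mul (s t : ZMod 4) :
    Complex.I ^ (s - t).val * Complex.I ^ t.val = Complex.I ^ s.val := by
  rw [← pow_add, I_pow_mod4]
  have h : ((s - t) + t).val = ((s - t).val + t.val) % 4 := ZMod.val_add _ _
  rw [← h, sub_add_cancel]

private lemma entry_calc (u w v : ℂ) (hu : ‖u‖ = 1) (s t : ZMod 4) :
    ((starRingEnd ℂ) u * Complex.I ^ t.val)⁻¹ * w * ((starRingEnd ℂ) v * Complex.I ^ s.val)
      = Complex.I ^ (s - t).val * (u * w * (starRingEnd ℂ) v) := by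
  have h3 : (Complex.I : ℂ) ^ t.val ≠ 0 := pow_ne_zero _ Complex.I_ne_zero
  have h2 : Complex.I ^ s.val = Complex.I ^ (s - t).val * Complex.I ^ t.val :=
    (I_zval_sub_mul s t).symm
  have h4 : ((starRingEnd ℂ) u)⁻¹ = u := inv_eq_of_mul_eq_one_right (unit_conj_mul hu)
  rw [mul_inv, h4, h2]
  field_simp

private lemma combo : ∀ a b c : ZMod 4, ∃ k₁ k₂ k₃ : ZMod 4,
    k₁ ≠ 2 ∧ k₂ ≠ 2 ∧ k₃ ≠ 2 ∧ (k₂ - k₁ = a ∨ k₂ - k₁ = a + 1) ∧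
    (k₃ - k₁ = b ∨ k₃ - k₁ = b + 1) ∧ (k₃ - k₂ = c ∨ k₃ - k₂ = c + 1) := by decide

private lemma quarter (c : ℂ) :
    ∃ t : ZMod 4, 0 ≤ (Complex.I ^ t.val * c).re ∧ 0 ≤ (Complex.I ^ (t + 1).val * c).re := by
  have v0 : ZMod.val (0 : ZMod 4) = 0 := rfl
  have v1 : ZMod.val (1 : ZMod 4) = 1 := rfl
  have v2 : ZMod.val (2 : ZMod 4) = 2 := rfl
  have v3 : ZMod.val (3 : ZMod 4) = 3 := rfl
  have v4 : ZMod.val ((3 : ZMod 4) + 1) = 0 := rfl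
  have v5 : ZMod.val ((2 : ZMod 4) + 1) = 3 := rfl
  have v6 : ZMod.val ((1 : ZMod 4) + 1) = 2 := rfl
  have v7 : ZMod.val ((0 : ZMod 4) + 1) = 1 := rfl
  rcases le_or_gt 0 c.re with hre | hre
  · rcases le_or_gt c.im 0 with him | him
    · refine ⟨0, ?_, ?_⟩
      · rw [v0]; norm_num [Complex.mul_re]; linarith
      · rw [v7]; norm_num [pow_succ, Complex.mul_re]; linarith
    · refine ⟨3, ?_, ?_⟩
      · rw [v3]; norm_num [pow_succ, Complex.mul_re]; linarith
      · rw [v4]; norm_num [Complex.mul_re]; linarith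
  · rcases le_or_gt 0 c.im with him | him
    · refine ⟨2, ?_, ?_⟩
      · rw [v2]; norm_num [pow_succ, Complex.mul_re]; linarith
      · rw [v5]; norm_num [pow_succ, Complex.mul_re]; linarith
    · refine ⟨1, ?_, ?_⟩
      · rw [v1]; norm_num [pow_succ, Complex.mul_re]; linarith
      · rw [v6]; norm_num [pow_succ, Complex.mul_re]; linarith

private lemma Ire_nonneg (k : ZMod 4) (h : k ≠ 2) : 0 ≤ (Complex.I ^ k.val).re := by
  have h4 : k.val < 4 := ZMod.val_lt k
  have hne : k.val ≠ 2 := fun h2 => h (ZMod.val_injective 4 (h2.trans rfl))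
  have : k.val = 0 ∨ k.val = 1 ∨ k.val = 3 := by omega
  rcases this with h0 | h0 | h0 <;> rw [h0] <;> norm_num [pow_succ, Complex.mul_re]

set_option maxHeartbeats 1000000 in
/-- Every gain matrix on the complete graph `K₄` is switching equivalent to a gain matrix
whose entries all have nonnegative real part. -/
theorem stmt_8 (A : Matrix (Fin 4) (Fin 4) ℂ)
    (hA : IsGainMatrix (⊤ : SimpleGraph (Fin 4)) A) :
    ∃ B : Matrix (Fin 4) (Fin 4) ℂ, IsGainMatrix (⊤ : SimpleGraph (Fin 4)) B ∧
      SwitchingEquiv A B ∧ ∀ i j, 0 ≤ (B i j).re := by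
  obtain ⟨hnorm, hzero, hconj⟩ := hA
  have hn : ∀ i j : Fin 4, i ≠ j → ‖A i j‖ = 1 := fun i j h => hnorm i j (by simpa using h)
  obtain ⟨t12, ht12, ht12'⟩ := quarter (A 0 1 * A 1 2 * (starRingEnd ℂ) (A 0 2))
  obtain ⟨t13, ht13, ht13'⟩ := quarter (A 0 1 * A 1 3 * (starRingEnd ℂ) (A 0 3))
  obtain ⟨t23, ht23, ht23'⟩ := quarter (A 0 2 * A 2 3 * (starRingEnd ℂ) (A 0 3))
  obtain ⟨k1, k2, k3, hk1, hk2, hk3, h12, h13, h23⟩ := combo t12 t13 t23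
  set a : Fin 4 → ℂ := ![1, A 0 1, A 0 2, A 0 3] with ha
  set K : Fin 4 → ZMod 4 := ![0, k1, k2, k3] with hK
  set ζ : Fin 4 → ℂ := fun v => (starRingEnd ℂ) (a v) * Complex.I ^ (K v).val with hζdef
  have hau : ∀ v, ‖a v‖ = 1 := by
    intro v
    fin_cases v
    · simp [ha]
    · exact hn 0 1 (by decide)
    · exact hn 0 2 (by decide)
    · exact hn 0 3 (by decide)
  have hζu : ∀ v, ‖ζ v‖ = 1 := by
    intro v
    rw [hζdef]
    simp [norm_mul, hau v]
  set B : Matrix (Fin 4) (Fin 4) ℂ :=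
    Matrix.of (fun i j => (ζ i)⁻¹ * A i j * ζ j) with hB
  have hBe : ∀ i j, B i j = Complex.I ^ (K j - K i).val *
      (a i * A i j * (starRingEnd ℂ) (a j)) := by
    intro i j
    rw [hB]
    exact entry_calc (a i) (A i j) (a j) (hau i) (K j) (K i)
  have hζinv : ∀ v, (ζ v)⁻¹ = (starRingEnd ℂ) (ζ v) := by
    intro v
    exact inv_eq_of_mul_eq_one_right (by
      rw [mul_comm]
      exact unit_conj_mul (hζu v))
  have hBconj : ∀ i j, B j i = (starRingEnd ℂ) (B i j) := by
    intro i j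
    rw [hB]
    show (ζ j)⁻¹ * A j i * ζ i = (starRingEnd ℂ) ((ζ i)⁻¹ * A i j * ζ j)
    rw [map_mul, map_mul, map_inv₀, ← hζinv i, inv_inv, ← hζinv j, hconj i j]
    ring
  have hgain : IsGainMatrix (⊤ : SimpleGraph (Fin 4)) B := by
    refine ⟨?_, ?_, hBconj⟩
    · intro i j hij
      have h1 : ‖A i j‖ = 1 := hnorm i j hij
      rw [hB]
      show ‖(ζ i)⁻¹ * A i j * ζ j‖ = 1
      rw [norm_mul, norm_mul, norm_inv, hζu i, hζu j, h1]
      norm_num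
    · intro i j hij
      have : i = j := by simpa using hij
      subst this
      rw [hB]
      show (ζ i)⁻¹ * A i i * ζ i = 0
      rw [hzero i i (by simp)]
      ring
  refine ⟨B, hgain, ⟨ζ, hζu, fun i j => rfl⟩, ?_⟩
  -- now re nonneg
  have hone : ∀ j : Fin 4, j ≠ 0 → A 0 j * (starRingEnd ℂ) (A 0 j) = 1 := by
    intro j hj
    rw [mul_comm]
    exact unit_conj_mul (hn 0 j (Ne.symm hj))
  have hdiag : ∀ i : Fin 4, 0 ≤ (B i i).re := by
    intro i
    rw [hBe i i, hzero i i (by simp)]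
    simp
  have hsymre : ∀ i j : Fin 4, (B j i).re = (B i j).re := by
    intro i j
    rw [hBconj i j, Complex.conj_re]
  have h01 : 0 ≤ (B 0 1).re := by
    rw [hBe 0 1, show a 0 = 1 from rfl, show a 1 = A 0 1 from rfl,
      show K 0 = 0 from rfl, show K 1 = k1 from rfl, one_mul, hone 1 (by decide), mul_one,
      sub_zero]
    exact Ire_nonneg k1 hk1
  have h02 : 0 ≤ (B 0 2).re := by
    rw [hBe 0 2, show a 0 = 1 from rfl, show a 2 = A 0 2 from rfl,
      show K 0 = 0 from rfl, show K 2 = k2 from rfl, one_mul, hone 2 (by decide), mul_one,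
      sub_zero]
    exact Ire_nonneg k2 hk2
  have h03 : 0 ≤ (B 0 3).re := by
    rw [hBe 0 3, show a 0 = 1 from rfl, show a 3 = A 0 3 from rfl,
      show K 0 = 0 from rfl, show K 3 = k3 from rfl, one_mul, hone 3 (by decide), mul_one,
      sub_zero]
    exact Ire_nonneg k3 hk3
  have e12 : 0 ≤ (B 1 2).re := by
    rw [hBe 1 2, show a 1 = A 0 1 from rfl, show a 2 = A 0 2 from rfl,
      show K 1 = k1 from rfl, show K 2 = k2 from rfl]
    rcases h12 with h | h <;> rw [h]
    · exact ht12
    · exact ht12'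
  have e13 : 0 ≤ (B 1 3).re := by
    rw [hBe 1 3, show a 1 = A 0 1 from rfl, show a 3 = A 0 3 from rfl,
      show K 1 = k1 from rfl, show K 3 = k3 from rfl]
    rcases h13 with h | h <;> rw [h]
    · exact ht13
    · exact ht13'
  have e23 : 0 ≤ (B 2 3).re := by
    rw [hBe 2 3, show a 2 = A 0 2 from rfl, show a 3 = A 0 3 from rfl,
      show K 2 = k2 from rfl, show K 3 = k3 from rfl]
    rcases h23 with h | h <;> rw [h]
    · exact ht23
    · exact ht23'
  have h10 : 0 ≤ (B 1 0).re := by rw [hsymre 0 1]; exact h01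
  have h20 : 0 ≤ (B 2 0).re := by rw [hsymre 0 2]; exact h02
  have h30 : 0 ≤ (B 3 0).re := by rw [hsymre 0 3]; exact h03
  have e21 : 0 ≤ (B 2 1).re := by rw [hsymre 1 2]; exact e12
  have e31 : 0 ≤ (B 3 1).re := by rw [hsymre 1 3]; exact e13
  have e32 : 0 ≤ (B 3 2).re := by rw [hsymre 2 3]; exact e23
  intro i j
  fin_cases i <;> fin_cases j <;>
    first
      | exact hdiag _
      | exact h01 | exact h02 | exact h03
      | exact h10 | exact h20 | exact h30
      | exact e12 | exact e13 | exact e23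
      | exact e21 | exact e31 | exact e32
end

section
/- Let G be a connected simple graph on a nonempty finite vertex set V and let A be a gain matrix on G such that every entry of A has nonnegative real part, i.e., 0 ≤ (A i j).re for all i, j. Then λ₁(A) ≤ ρ(A) ≤ 3 · λ₁(A), where λ₁(A) is the largest eigenvalue of A and ρ(A) is the spectral radius of A. -/
open SimpleGraph Complex Finset

private lemma key_pointwise (c u w : ℂ) (hc : 0 ≤ c.re) :
    -((starRingEnd ℂ) u * (c * w)).re ≤
      (u * (c * (starRingEnd ℂ) w)).re + 2 * ((‖u‖ : ℂ) * (c * (‖w‖ : ℂ))).re := by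
  have hd : -(‖u‖ * ‖w‖) ≤ ((starRingEnd ℂ) u * w).re := by
    have h1 : |((starRingEnd ℂ) u * w).re| ≤ ‖(starRingEnd ℂ) u * w‖ := Complex.abs_re_le_norm _
    have h2 : ‖(starRingEnd ℂ) u * w‖ = ‖u‖ * ‖w‖ := by
      rw [norm_mul, RCLike.norm_conj]
    rw [h2] at h1
    linarith [neg_abs_le (((starRingEnd ℂ) u * w).re)]
  have hprod : 0 ≤ c.re * (‖u‖ * ‖w‖ + ((starRingEnd ℂ) u * w).re) :=
    mul_nonneg hc (by linarith)
  simp only [Complex.mul_re, Complex.mul_im, Complex.conj_re, Complex.conj_im,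
    Complex.ofReal_re, Complex.ofReal_im] at *
  ring_nf at *
  nlinarith [hprod]

private lemma rayleigh_le_s9 {V : Type*} [Fintype V] [DecidableEq V] {A : Matrix V V ℂ}
    (hA : A.IsHermitian) (v : V → ℂ) :
    (dotProduct (star v) (A.mulVec v)).re ≤
      (⨆ i, hA.eigenvalues i) * ∑ j, ‖v j‖ ^ 2 := by
  classical
  set b := hA.eigenvectorBasis with hb
  set x : EuclideanSpace ℂ V := (WithLp.equiv 2 (V → ℂ)).symm v with hx
  have hT : ∀ k, Matrix.toEuclideanLin A (b k) = (hA.eigenvalues k : ℂ) • b k := by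
    intro k
    apply (WithLp.equiv 2 (V → ℂ)).injective
    funext j
    have h := congrFun (hA.mulVec_eigenvectorBasis k) j
    simpa [Matrix.toEuclideanLin_apply, Complex.real_smul] using h
  set c : V → ℂ := fun k => inner ℂ (b k) x with hc
  have hTx : Matrix.toEuclideanLin A x = ∑ k, c k • ((hA.eigenvalues k : ℂ) • b k) := by
    conv_lhs => rw [← b.sum_repr' x]
    rw [map_sum]
    exact Finset.sum_congr rfl fun k _ => by rw [map_smul, hT k]
  have hexp : (inner ℂ x (Matrix.toEuclideanLin A x) : ℂ)
      = ∑ k, (hA.eigenvalues k : ℂ) * (c k * (starRingEnd ℂ) (c k)) := by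
    rw [hTx, inner_sum]
    refine Finset.sum_congr rfl fun k _ => ?_
    rw [inner_smul_right, inner_smul_right]
    have : (inner ℂ x (b k) : ℂ) = (starRingEnd ℂ) (c k) := by
      rw [hc, ← inner_conj_symm]
    rw [this]; ring
  have hdot : (dotProduct (star v) (A.mulVec v)) = inner ℂ x (Matrix.toEuclideanLin A x) := by
    rw [EuclideanSpace.inner_eq_star_dotProduct, dotProduct_comm]; rfl
  rw [hdot, hexp, Complex.re_sum]
  have hnorm : ∀ k, ((hA.eigenvalues k : ℂ) * (c k * (starRingEnd ℂ) (c k))).re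
      = hA.eigenvalues k * ‖c k‖ ^ 2 := by
    intro k
    rw [Complex.mul_conj, ← Complex.ofReal_mul, Complex.ofReal_re, Complex.normSq_eq_norm_sq]
  have hL : ∀ k, hA.eigenvalues k ≤ ⨆ i, hA.eigenvalues i := fun k =>
    le_ciSup (Set.finite_range hA.eigenvalues).bddAbove k
  have hsum : ∑ k, ‖c k‖ ^ 2 = ∑ j, ‖v j‖ ^ 2 := by
    have h1 : ∀ k, c k = b.repr x k := fun k => (b.repr_apply_apply x k).symm
    calc ∑ k, ‖c k‖ ^ 2 = ∑ k, ‖b.repr x k‖ ^ 2 := by simp [h1]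
      _ = ‖b.repr x‖ ^ 2 := (PiLp.norm_sq_eq_of_L2 _ _).symm
      _ = ‖x‖ ^ 2 := by rw [b.repr.norm_map x]
      _ = ∑ j, ‖x j‖ ^ 2 := PiLp.norm_sq_eq_of_L2 _ _
      _ = ∑ j, ‖v j‖ ^ 2 := rfl
  calc ∑ k, ((hA.eigenvalues k : ℂ) * (c k * (starRingEnd ℂ) (c k))).re
      = ∑ k, hA.eigenvalues k * ‖c k‖ ^ 2 := by simp [hnorm]
    _ ≤ ∑ k, (⨆ i, hA.eigenvalues i) * ‖c k‖ ^ 2 :=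
        Finset.sum_le_sum fun k _ => mul_le_mul_of_nonneg_right (hL k) (sq_nonneg _)
    _ = (⨆ i, hA.eigenvalues i) * ∑ k, ‖c k‖ ^ 2 := by rw [Finset.mul_sum]
    _ = (⨆ i, hA.eigenvalues i) * ∑ j, ‖v j‖ ^ 2 := by rw [hsum]

/-- For a gain matrix all of whose entries have nonnegative real part,
`λ₁(A) ≤ ρ(A) ≤ 3λ₁(A)`. -/
theorem stmt_9 {V : Type*} [Fintype V] [Nonempty V] [DecidableEq V]
    (G : SimpleGraph V) (hG : G.Connected)
    (A : Matrix V V ℂ) (hA : IsGainMatrix G A)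
    (hre : ∀ i j, 0 ≤ (A i j).re) :
    lambdaMax A hA.isHermitian ≤ specRad A hA.isHermitian ∧
      specRad A hA.isHermitian ≤ 3 * lambdaMax A hA.isHermitian := by
  classical
  have hAH := hA.isHermitian
  set lam := hAH.eigenvalues with hlam
  set L := lambdaMax A hAH with hLdef
  have hbdd : BddAbove (Set.range lam) := (Set.finite_range lam).bddAbove
  have hle : ∀ i, lam i ≤ L := fun i => le_ciSup hbdd i
  -- trace is zero, so the largest eigenvalue is nonnegative
  have hdiag : ∀ j, A j j = 0 := fun j => hA.2.1 j j (G.irrefl)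
  have htr : ∑ i, lam i = 0 := by
    have h1 : A.trace = ∑ i, (lam i : ℂ) := by
      calc A.trace = ((hAH.eigenvectorUnitary : Matrix V V ℂ) *
              (Matrix.diagonal (RCLike.ofReal ∘ lam) *
                (star hAH.eigenvectorUnitary : Matrix V V ℂ))).trace := by
            rw [← Matrix.mul_assoc]; conv_lhs => rw [hAH.spectral_theorem, Unitary.conjStarAlgAut_apply]
        _ = (Matrix.diagonal (RCLike.ofReal ∘ lam) *
              ((star hAH.eigenvectorUnitary : Matrix V V ℂ) *
                (hAH.eigenvectorUnitary : Matrix V V ℂ))).trace := by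
            rw [Matrix.trace_mul_comm, Matrix.mul_assoc]
        _ = (Matrix.diagonal (RCLike.ofReal ∘ lam)).trace := by
            rw [Unitary.coe_star_mul_self, Matrix.mul_one]
        _ = ∑ i, (lam i : ℂ) := by simp [Matrix.trace_diagonal]
    have h2 : A.trace = 0 := by simp [Matrix.trace, hdiag]
    have h3 : ((∑ i, lam i : ℝ) : ℂ) = 0 := by push_cast; rw [← h1, h2]
    exact_mod_cast h3
  have hL0 : 0 ≤ L := by
    by_contra h
    push_neg at h
    have : ∑ i, lam i < 0 :=
      Finset.sum_neg (fun i _ => lt_of_le_of_lt (hle i) h) Finset.univ_nonempty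
    linarith [htr ▸ this]
  -- the key bound : -lam i ≤ 3 * L for each i
  have hmain : ∀ i, -lam i ≤ 3 * L := by
    intro i
    set x : V → ℂ := ⇑(hAH.eigenvectorBasis i) with hxdef
    have hx1 : ∑ j, ‖x j‖ ^ 2 = 1 := by
      have h1 : ‖hAH.eigenvectorBasis i‖ = 1 := hAH.eigenvectorBasis.orthonormal.1 i
      have h2 := PiLp.norm_sq_eq_of_L2 (fun _ : V => ℂ) (hAH.eigenvectorBasis i)
      rw [h1] at h2
      simpa using h2.symm
    have heig : lam i = (dotProduct (star x) (A.mulVec x)).re := hAH.eigenvalues_eq i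
    have hQ : ∀ v : V → ℂ, (dotProduct (star v) (A.mulVec v)).re
        = ∑ j, ∑ k, ((starRingEnd ℂ) (v j) * (A j k * v k)).re := by
      intro v
      rw [dotProduct]
      simp only [Matrix.mulVec, dotProduct, Pi.star_apply, Finset.mul_sum]
      rw [Complex.re_sum]
      exact Finset.sum_congr rfl fun j _ => Complex.re_sum _ _
    set y : V → ℂ := fun j => (starRingEnd ℂ) (x j) with hydef
    set a : V → ℂ := fun j => (‖x j‖ : ℂ) with hadef
    have hy1 : ∑ j, ‖y j‖ ^ 2 = 1 := by
      simpa [hydef, RCLike.norm_conj] using hx1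
    have ha1 : ∑ j, ‖a j‖ ^ 2 = 1 := by
      simpa [hadef] using hx1
    have hkey : -(dotProduct (star x) (A.mulVec x)).re ≤
        (dotProduct (star y) (A.mulVec y)).re +
          2 * (dotProduct (star a) (A.mulVec a)).re := by
      rw [hQ x, hQ y, hQ a, Finset.mul_sum, ← Finset.sum_add_distrib, ← Finset.sum_neg_distrib]
      refine Finset.sum_le_sum fun j _ => ?_
      rw [Finset.mul_sum, ← Finset.sum_add_distrib, ← Finset.sum_neg_distrib]
      refine Finset.sum_le_sum fun k _ => ?_
      have h := key_pointwise (A j k) (x j) (x k) (hre j k)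
      simpa [hydef, hadef, Complex.conj_conj, Complex.conj_ofReal] using h
    have hry := rayleigh_le_s9 hAH y
    have hra := rayleigh_le_s9 hAH a
    rw [hy1] at hry
    rw [ha1] at hra
    have hLsup : (⨆ k, hAH.eigenvalues k) = L := rfl
    rw [hLsup, mul_one] at hry hra
    rw [heig]
    linarith
  constructor
  · refine ciSup_le fun i => ?_
    exact le_trans (le_abs_self _) (le_ciSup (Set.finite_range fun i => |lam i|).bddAbove i)
  · refine ciSup_le fun i => ?_
    rw [abs_le]
    constructor
    · linarith [hmain i]
    · linarith [hle i, hL0]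
end
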